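/- arXiv:math/0609051 — 9 statements merged into one kernel-verified Lean document; each statement's English description precedes it below -/
import Mathlib

section
/- Theorem 3.1 (integral expansion, Möbius form). Let E be an integral gain graph on vertex set {1,…,n} and let m ≥ 0 be an integer. Then the number of proper maps x : {1,…,n} → {1,2,…,m} (i.e. maps with 1 ≤ x_v ≤ m for all v that are proper for E) equals ∑_{B ∈ Lat^b(E)} μ(∅,B) · ∏_{W ∈ π(B)} (m − h_B(W))⁺. -/
open Finset
open scoped Classical

/-- An edge of an integral gain graph on `Fin n`: the triple `(i, j, g)` represents an edge
from `i` to `j` with gain `g`. -/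
abbrev GainEdge (n : ℕ) := Fin n × Fin n × ℤ

/-- `θ` is a potential for the edge set `S`: `θ j - θ i = g` for every edge `(i, j, g) ∈ S`. -/
def IsPotential {n : ℕ} (S : Finset (GainEdge n)) (θ : Fin n → ℤ) : Prop :=
  ∀ e ∈ S, θ e.2.1 - θ e.1 = e.2.2

/-- An edge set is balanced if it admits a potential. -/
def IsBalanced {n : ℕ} (S : Finset (GainEdge n)) : Prop :=
  ∃ θ : Fin n → ℤ, IsPotential S θ

/-- Two vertices lie in the same connected component of (the underlying graph of) `S`. -/
def SameComp {n : ℕ} (S : Finset (GainEdge n)) (u v : Fin n) : Prop :=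
  Relation.EqvGen (fun a b => ∃ g : ℤ, (a, b, g) ∈ S) u v

/-- The partition `π(S)` of the vertex set into the connected components of `S`,
represented as the finite set of its blocks. -/
noncomputable def blocks {n : ℕ} (S : Finset (GainEdge n)) : Finset (Finset (Fin n)) :=
  Finset.univ.image fun v => Finset.univ.filter fun u => SameComp S u v

/-- A balanced edge set `B ⊆ E` is closed (in `E`) if adjoining to `B` any edge of `E ∖ B` whose
endpoints lie in the same block of `π(B)` destroys balance. -/
def GGClosed {n : ℕ} (E B : Finset (GainEdge n)) : Prop :=
  ∀ e ∈ E \ B, SameComp B e.1 e.2.1 → ¬ IsBalanced (insert e B)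

/-- The poset `Lat^b(E)` of closed balanced subsets of `E` (as a finite set, ordered by
inclusion). -/
noncomputable def Latb {n : ℕ} (E : Finset (GainEdge n)) : Finset (Finset (GainEdge n)) :=
  E.powerset.filter fun B => IsBalanced B ∧ GGClosed E B

/-- A coloration `x` is proper for `E` if `x j ≠ x i + g` for every edge `(i, j, g) ∈ E`. -/
def ProperFor {n : ℕ} (E : Finset (GainEdge n)) (x : Fin n → ℤ) : Prop :=
  ∀ e ∈ E, x e.2.1 ≠ x e.1 + e.2.2

/-- The number of proper colorations of `E` with colors in `{1, …, m}`. -/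
noncomputable def properCount {n : ℕ} (E : Finset (GainEdge n)) (m : ℤ) : ℕ :=
  Nat.card {x : Fin n → ℤ // (∀ v, 1 ≤ x v ∧ x v ≤ m) ∧ ProperFor E x}

/-! For a colouring `x` let `I x = satisfiedEdges E x` be the set of edges `(i, j, g) ∈ E` with
`x j = x i + g`. It is always closed and balanced (with potential `x`), and `x` is proper exactly
when `I x = ∅`. For `B ∈ Lat^b(E)` the colourings with `B ⊆ I x` are the potentials of `B` inside
the box `{1, …, m}ⁿ`: on each block `W` of `π(B)` such a potential is a fixed potential `θ` shifted
by a constant, and the admissible shifts form an interval of length `(m - h_B(W))⁺`. Hence the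
right-hand side is `∑_B μ(∅, B) #{x | B ⊆ I x}`, and summing `μ` over `[∅, I x]` for each `x`
leaves exactly the colourings with `I x = ∅`. -/

theorem sum_mul_card_filter_rel_eq_card_filter_eq {β γ : Type*} [DecidableEq β]
    (r : β → β → Prop) [DecidableRel r] (L : Finset β) (s : Finset γ) (I : γ → β)
    (hI : ∀ x ∈ s, I x ∈ L) (mu : β → ℤ) (b₀ : β)
    (hmu : ∀ B ∈ L, ∑ A ∈ L with r A B, mu A = if B = b₀ then 1 else 0) :
    ∑ B ∈ L, mu B * #{x ∈ s | r B (I x)} = #{x ∈ s | I x = b₀} := by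
  calc ∑ B ∈ L, mu B * #{x ∈ s | r B (I x)}
      = ∑ x ∈ s, ∑ B ∈ L with r B (I x), mu B := by
        simp only [card_filter, sum_filter, Nat.cast_sum, Nat.cast_ite, Nat.cast_one,
          Nat.cast_zero, mul_sum, mul_ite, mul_one, mul_zero]
        exact sum_comm
    _ = #{x ∈ s | I x = b₀} := by
        rw [card_filter, Nat.cast_sum]
        refine sum_congr rfl fun x hx => ?_
        rw [hmu _ (hI x hx)]
        split_ifs <;> rfl

noncomputable def height {α : Type*} (θ : α → ℤ) (W : Finset α) : ℤ :=
  if hW : W.Nonempty then W.sup' hW θ - W.inf' hW θ else 0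

section Shifts

variable {α : Type*} {W : Finset α}

theorem mem_Icc_inf'_sup'_iff (hW : W.Nonempty) (θ : α → ℤ) (l m c : ℤ) :
    c ∈ Icc (l - W.inf' hW θ) (m - W.sup' hW θ) ↔ ∀ a ∈ W, θ a + c ∈ Icc l m := by
  have hlow : l - W.inf' hW θ ≤ c ↔ ∀ a ∈ W, l ≤ θ a + c := by
    rw [sub_le_comm, le_inf'_iff]
    exact forall₂_congr fun _ _ => by omega
  have hhigh : c ≤ m - W.sup' hW θ ↔ ∀ a ∈ W, θ a + c ≤ m := by
    rw [le_sub_comm, sup'_le_iff]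
    exact forall₂_congr fun _ _ => by omega
  simp only [mem_Icc, hlow, hhigh, ← forall₂_and]

theorem card_Icc_inf'_sup' (hW : W.Nonempty) (θ : α → ℤ) (m : ℤ) :
    (#(Icc (1 - W.inf' hW θ) (m - W.sup' hW θ)) : ℤ) = max (m - height θ W) 0 := by
  rw [Int.card_Icc, Int.toNat_eq_max, height, dif_pos hW]
  ring_nf

variable [Fintype α] [DecidableEq α]

theorem Finpartition.card_filter_sub_const_on_parts_eq_card_piFinset
    (P : Finpartition (univ : Finset α)) (θ : α → ℤ) (m : ℤ) :
    #{x ∈ Fintype.piFinset fun _ => Icc 1 m | ∀ a, ∀ b ∈ P.part a, x a - θ a = x b - θ b}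
      = #(Fintype.piFinset fun W : P.parts =>
          Icc (1 - W.1.inf' (P.nonempty_of_mem_parts W.2) θ)
            (m - W.1.sup' (P.nonempty_of_mem_parts W.2) θ)) := by
  have hpart (a : α) : P.part a ∈ P.parts := P.part_mem.2 (mem_univ a)
  let rep (W : P.parts) : α := (P.nonempty_of_mem_parts W.2).choose
  have hrep (W : P.parts) : P.part (rep W) = W :=
    P.part_eq_of_mem W.2 (P.nonempty_of_mem_parts W.2).choose_spec
  refine card_nbij' (fun x W => x (rep W) - θ (rep W))
    (fun c a => θ a + c ⟨P.part a, hpart a⟩) ?_ ?_ ?_ ?_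
  · intro x hx
    simp only [coe_filter, Set.mem_ofPred_eq, Fintype.mem_piFinset] at hx
    simp only [mem_coe, Fintype.mem_piFinset, mem_Icc_inf'_sup'_iff]
    intro W a ha
    rw [← hrep W] at ha
    rw [hx.2 _ a ha, add_sub_cancel]
    exact hx.1 a
  · intro c hc
    simp only [mem_coe, Fintype.mem_piFinset, mem_Icc_inf'_sup'_iff] at hc
    simp only [coe_filter, Set.mem_ofPred_eq, Fintype.mem_piFinset]
    refine ⟨fun a => hc _ a (P.mem_part_self.2 (mem_univ a)), fun a b hb => ?_⟩
    have hab : (⟨P.part b, hpart b⟩ : P.parts) = ⟨P.part a, hpart a⟩ :=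
      Subtype.ext (P.part_eq_of_mem (hpart a) hb)
    rw [hab]
    ring
  · intro x hx
    simp only [coe_filter, Set.mem_ofPred_eq] at hx
    funext a
    have hr : rep ⟨P.part a, hpart a⟩ ∈ P.part a := (P.nonempty_of_mem_parts (hpart a)).choose_spec
    have := hx.2 a _ hr
    simp only
    omega
  · intro c _
    funext W
    have hW : (⟨P.part (rep W), hpart (rep W)⟩ : P.parts) = W := Subtype.ext (hrep W)
    simp only [hW]
    ring

theorem Finpartition.card_filter_sub_const_on_parts (P : Finpartition (univ : Finset α))
    (θ : α → ℤ) (m : ℤ) :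
    (#{x ∈ Fintype.piFinset fun _ => Icc 1 m | ∀ a, ∀ b ∈ P.part a, x a - θ a = x b - θ b}
      : ℤ) = ∏ W ∈ P.parts, max (m - height θ W) 0 := by
  rw [P.card_filter_sub_const_on_parts_eq_card_piFinset, Fintype.card_piFinset, Nat.cast_prod,
    ← prod_coe_sort P.parts]
  exact prod_congr rfl fun W _ => card_Icc_inf'_sup' (P.nonempty_of_mem_parts W.2) θ m

end Shifts

section GainGraph

variable {n : ℕ}

def componentSetoid (S : Finset (GainEdge n)) : Setoid (Fin n) :=
  Relation.EqvGen.setoid fun a b => ∃ g : ℤ, (a, b, g) ∈ S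

theorem blocks_eq_parts_ofSetoid (S : Finset (GainEdge n)) :
    blocks S = (Finpartition.ofSetoid (componentSetoid S)).parts := by
  rw [Finpartition.ofSetoid, Finpartition.ofSetSetoid_parts, blocks]
  refine image_congr fun v _ => ?_
  ext u
  simp only [mem_filter, mem_univ, true_and]
  exact ⟨Relation.EqvGen.symm _ _, Relation.EqvGen.symm _ _⟩

theorem IsPotential.sub_eq_sub_of_sameComp {S : Finset (GainEdge n)} {θ x : Fin n → ℤ}
    (hθ : IsPotential S θ) (hx : IsPotential S x) {u v : Fin n} (h : SameComp S u v) :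
    x u - θ u = x v - θ v := by
  induction h with
  | rel a b hab =>
    obtain ⟨g, hg⟩ := hab
    have hθg : θ b - θ a = g := hθ _ hg
    have hxg : x b - x a = g := hx _ hg
    omega
  | refl => rfl
  | symm _ _ _ ih => exact ih.symm
  | trans _ _ _ _ _ ih₁ ih₂ => exact ih₁.trans ih₂

theorem IsPotential.isPotential_iff_sub_eq_sub {S : Finset (GainEdge n)} {θ : Fin n → ℤ}
    (hθ : IsPotential S θ) {x : Fin n → ℤ} :
    IsPotential S x ↔ ∀ u v, SameComp S u v → x u - θ u = x v - θ v := by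
  refine ⟨fun hx _ _ => hθ.sub_eq_sub_of_sameComp hx, fun h e he => ?_⟩
  have hshift := h e.1 e.2.1 (Relation.EqvGen.rel _ _ ⟨e.2.2, he⟩)
  have hθe := hθ e he
  omega

theorem IsPotential.card_filter_isPotential {S : Finset (GainEdge n)} {θ : Fin n → ℤ}
    (hθ : IsPotential S θ) (m : ℤ) :
    (#{x ∈ Fintype.piFinset fun _ => Icc 1 m | IsPotential S x} : ℤ)
      = ∏ W ∈ blocks S, max (m - height θ W) 0 := by
  rw [blocks_eq_parts_ofSetoid, ← Finpartition.card_filter_sub_const_on_parts]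
  simp only [Finpartition.mem_part_ofSetoid_iff_rel, hθ.isPotential_iff_sub_eq_sub]
  rfl

noncomputable def satisfiedEdges (E : Finset (GainEdge n)) (x : Fin n → ℤ) :
    Finset (GainEdge n) :=
  {e ∈ E | x e.2.1 = x e.1 + e.2.2}

theorem isPotential_satisfiedEdges (E : Finset (GainEdge n)) (x : Fin n → ℤ) :
    IsPotential (satisfiedEdges E x) x := by
  intro e he
  rw [satisfiedEdges, mem_filter] at he
  omega

theorem satisfiedEdges_mem_Latb (E : Finset (GainEdge n)) (x : Fin n → ℤ) :
    satisfiedEdges E x ∈ Latb E := by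
  refine mem_filter.2 ⟨mem_powerset.2 (filter_subset _ _),
    ⟨x, isPotential_satisfiedEdges E x⟩, fun e he hcomp ⟨θ, hθ⟩ => ?_⟩
  have hdiff := (isPotential_satisfiedEdges E x).sub_eq_sub_of_sameComp
    (fun e' he' => hθ e' (mem_insert_of_mem he')) hcomp
  have he_gain := hθ e (mem_insert_self e _)
  rw [mem_sdiff] at he
  exact he.2 (mem_filter.2 ⟨he.1, by omega⟩)

theorem isPotential_iff_subset_satisfiedEdges {B E : Finset (GainEdge n)} (hB : B ⊆ E)
    {x : Fin n → ℤ} : IsPotential B x ↔ B ⊆ satisfiedEdges E x := by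
  refine ⟨fun hx e he => mem_filter.2 ⟨hB he, by have := hx e he; omega⟩, fun h e he => ?_⟩
  have hxe := (mem_filter.1 (h he)).2
  omega

theorem properCount_eq_card_filter (E : Finset (GainEdge n)) (m : ℤ) :
    properCount E m = #{x ∈ Fintype.piFinset fun _ => Icc 1 m | satisfiedEdges E x = ∅} := by
  rw [properCount, ← Nat.card_eq_finsetCard]
  refine Nat.card_congr (Equiv.subtypeEquivRight fun x => ?_)
  simp [Fintype.mem_piFinset, satisfiedEdges, filter_eq_empty_iff, ProperFor]

end GainGraph

theorem integral_expansion_general (n : ℕ) (E : Finset (GainEdge n))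
    (m : ℤ)
    (mu : Finset (GainEdge n) → ℤ)
    (hmu : ∀ B ∈ Latb E,
      ∑ A ∈ (Latb E).filter (· ⊆ B), mu A = if B = ∅ then 1 else 0)
    (ht : Finset (GainEdge n) → Finset (Fin n) → ℤ)
    (hht : ∀ B ∈ Latb E, ∀ θ : Fin n → ℤ, IsPotential B θ →
      ∀ W ∈ blocks B, ∀ hW : W.Nonempty, ht B W = W.sup' hW θ - W.inf' hW θ) :
    (properCount E m : ℤ) =
      ∑ B ∈ Latb E, mu B * ∏ W ∈ blocks B, max (m - ht B W) 0 := by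
  have hterm : ∀ B ∈ Latb E, ∏ W ∈ blocks B, max (m - ht B W) 0
      = #{x ∈ Fintype.piFinset fun _ => Icc 1 m | B ⊆ satisfiedEdges E x} := by
    intro B hB
    obtain ⟨hBE, ⟨θ, hθ⟩, -⟩ := (mem_filter.1 hB).imp_left mem_powerset.1
    rw [← filter_congr fun x _ => isPotential_iff_subset_satisfiedEdges hBE,
      hθ.card_filter_isPotential]
    refine prod_congr rfl fun W hW => ?_
    have hWne := (Finpartition.ofSetoid (componentSetoid B)).nonempty_of_mem_parts
      (blocks_eq_parts_ofSetoid B ▸ hW)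
    rw [hht B hB θ hθ W hW hWne, height, dif_pos hWne]
  rw [sum_congr rfl fun B hB => congrArg (mu B * ·) (hterm B hB), properCount_eq_card_filter,
    sum_mul_card_filter_rel_eq_card_filter_eq (· ⊆ ·) _ _ _
      (fun x _ => satisfiedEdges_mem_Latb E x) mu ∅ hmu]

/-- **Theorem 3.1** (integral expansion, Möbius form).  For an integral gain graph `E` on
`{1, …, n}` and an integer `m ≥ 0`, the number of proper colorations with colors in `{1, …, m}`
equals `∑_{B ∈ Lat^b(E)} μ(∅, B) ∏_{W ∈ π(B)} (m − h_B(W))⁺`.  Here `mu` is the Möbius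
function of the poset `Lat^b(E)` (characterized by its defining recurrence `hmu`), and
`ht B W` is the height `h_B(W) = max_{v ∈ W} θ v − min_{v ∈ W} θ v` for any potential `θ`
of `B` (characterized by `hht`). -/
theorem integral_expansion (n : ℕ) (E : Finset (GainEdge n))
    (hE : ∀ e ∈ E, e.1 < e.2.1)
    (m : ℤ) (hm : 0 ≤ m)
    (mu : Finset (GainEdge n) → ℤ)
    (hmu : ∀ B ∈ Latb E,
      ∑ A ∈ (Latb E).filter (· ⊆ B), mu A = if B = ∅ then 1 else 0)
    (ht : Finset (GainEdge n) → Finset (Fin n) → ℤ)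
    (hht : ∀ B ∈ Latb E, ∀ θ : Fin n → ℤ, IsPotential B θ →
      ∀ W ∈ blocks B, ∀ hW : W.Nonempty, ht B W = W.sup' hW θ - W.inf' hW θ) :
    (properCount E m : ℤ) =
      ∑ B ∈ Latb E, mu B * ∏ W ∈ blocks B, max (m - ht B W) 0 :=
  integral_expansion_general n E m mu hmu ht hht
end

section
/- Theorem 3.4 (deletion–contraction for rooted integral gain graphs). Let n ≥ 1, let E be a finite set of triples (u,v,g') with u,v ∈ {1,…,n} and g' ∈ ℤ (arbitrary orientations and loops allowed), let h : {1,…,n} → ℤ, and for an integer m let χ(E,h,m) be the number of maps x : {1,…,n} → ℤ with h_v < x_v ≤ m for all v and x_v ≠ x_u + g' for all (u,v,g') ∈ E. Let e = (i,j,g) ∈ E with i ≠ j and g ≥ 0. Define η : {1,…,n} → ℤ by η_i = g and η_v = 0 for v ≠ i; define q : {1,…,n} → {1,…,n}∖{i} by q(i) = j and q(v) = v otherwise; let E/e := { (q(u), q(v), g' + η_v − η_u) : (u,v,g') ∈ E ∖ {e} }, a finite set of triples on the vertex set V' := {1,…,n}∖{i}; and let h' : V' → ℤ be given by h'_j = max(h_j,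 h_i + g) and h'_v = h_v for v ≠ j. Then for every integer m: χ(E,h,m) = χ(E∖{e}, h, m) − χ(E/e, h', m), where χ(E/e, h', m) is the analogous count of maps x : V' → ℤ. (The case g < 0 reduces to this one by replacing the triple (i,j,g) with the equivalent triple (j,i,−g).) -/
/-!
Split the proper colorations of `E ∖ {e}` according to whether `x j = x i + g`. Those with
`x j ≠ x i + g` are exactly the proper colorations of `E`. Those with `x j = x i + g` are
determined by their restriction `y` to `V ∖ {i}`, recovered as `x v = y (q v) - η v`; under this
switching the edges of `E ∖ {e}` become those of `E/e`, and the bound `h i < x i` becomes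
`h i + g < y j`, which is what the new root `h' j = max (h j) (h i + g)` records. The upper bound
`x i = y j - g ≤ m` is where `g ≥ 0` enters.
-/

open Finset
open scoped Classical

/-- The number of proper rooted `m`-colorations of the rooted integral gain graph `(E, h)` on a
finite vertex set `V`: maps `x : V → ℤ` with `h v < x v ≤ m` for every vertex `v`, such that
`x v ≠ x u + g` for every edge `(u, v, g) ∈ E`. -/
noncomputable def rootedChi {V : Type*} [Fintype V] (E : Finset (V × V × ℤ)) (h : V → ℤ)
    (m : ℤ) : ℕ :=
  Nat.card {x : V → ℤ // (∀ v, h v < x v ∧ x v ≤ m) ∧ ∀ e ∈ E, x e.2.1 ≠ x e.1 + e.2.2}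

/-- The switching function `η` used in contracting the edge `(i, j, g)`:
`η i = g` and `η v = 0` for `v ≠ i`. -/
def contrEta {n : ℕ} (i : Fin n) (g : ℤ) (v : Fin n) : ℤ :=
  if v = i then g else 0

/-- The vertex contraction map `q : {1, …, n} → {1, …, n} ∖ {i}` sending `i` to `j` and fixing
every other vertex. -/
def contrMap {n : ℕ} (i j : Fin n) (hij : i ≠ j) (v : Fin n) : {v : Fin n // v ≠ i} :=
  if hv : v = i then ⟨j, Ne.symm hij⟩ else ⟨v, hv⟩

section Coloring

variable {V : Type*}

def rootedColorings (E : Finset (V × V × ℤ)) (h : V → ℤ) (m : ℤ) : Set (V → ℤ) :=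
  {x | (∀ v, h v < x v ∧ x v ≤ m) ∧ ∀ e ∈ E, x e.2.1 ≠ x e.1 + e.2.2}

theorem rootedChi_eq_ncard [Fintype V] (E : Finset (V × V × ℤ)) (h : V → ℤ) (m : ℤ) :
    rootedChi E h m = (rootedColorings E h m).ncard :=
  Nat.card_coe_set_eq _

theorem rootedColorings_finite [Finite V] (E : Finset (V × V × ℤ)) (h : V → ℤ) (m : ℤ) :
    (rootedColorings E h m).Finite :=
  (Set.Finite.pi fun v => Set.finite_Ioc (h v) m).subset fun _ hx v _ => hx.1 v

theorem rootedColorings_erase_sdiff [DecidableEq V] {E : Finset (V × V × ℤ)} {e : V × V × ℤ}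
    (he : e ∈ E) (h : V → ℤ) (m : ℤ) :
    rootedColorings (E.erase e) h m \ {x | x e.2.1 = x e.1 + e.2.2} = rootedColorings E h m := by
  ext x
  simp only [rootedColorings, Set.mem_sdiff, Set.mem_ofPred_eq, mem_erase]
  constructor
  · rintro ⟨⟨hbd, hedges⟩, hx⟩
    refine ⟨hbd, fun e' he' => ?_⟩
    rcases eq_or_ne e' e with rfl | hne
    · exact hx
    · exact hedges e' ⟨hne, he'⟩
  · rintro ⟨hbd, hedges⟩
    exact ⟨⟨hbd, fun e' he' => hedges e' he'.2⟩, hedges e he⟩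

theorem ncard_rootedColorings_erase [Finite V] [DecidableEq V] {E : Finset (V × V × ℤ)}
    {e : V × V × ℤ} (he : e ∈ E) (h : V → ℤ) (m : ℤ) :
    (rootedColorings (E.erase e) h m).ncard =
      (rootedColorings E h m).ncard +
        (rootedColorings (E.erase e) h m ∩ {x | x e.2.1 = x e.1 + e.2.2}).ncard := by
  rw [← rootedColorings_erase_sdiff he, add_comm,
    Set.ncard_inter_add_ncard_sdiff_eq_ncard _ _ (rootedColorings_finite _ h m)]

end Coloring

section Contraction

variable {n : ℕ} (i j : Fin n) (hij : i ≠ j) (g : ℤ)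

def contrEdge (e : Fin n × Fin n × ℤ) : {v : Fin n // v ≠ i} × {v : Fin n // v ≠ i} × ℤ :=
  (contrMap i j hij e.1, contrMap i j hij e.2.1, e.2.2 + contrEta i g e.2.1 - contrEta i g e.1)

def contrHeight (h : Fin n → ℤ) (v : {v : Fin n // v ≠ i}) : ℤ :=
  if (v : Fin n) = j then max (h j) (h i + g) else h v

def contrLift (y : {v : Fin n // v ≠ i} → ℤ) (v : Fin n) : ℤ :=
  y (contrMap i j hij v) - contrEta i g v

variable {i j g}

theorem contrLift_self (y : {v : Fin n // v ≠ i} → ℤ) :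
    contrLift i j hij g y i = y ⟨j, hij.symm⟩ - g := by
  simp [contrLift, contrMap, contrEta]

theorem contrLift_of_ne (y : {v : Fin n // v ≠ i} → ℤ) {v : Fin n} (hv : v ≠ i) :
    contrLift i j hij g y v = y ⟨v, hv⟩ := by
  simp [contrLift, contrMap, contrEta, hv]

theorem contrLift_injective : Function.Injective (contrLift i j hij g) := by
  refine Function.LeftInverse.injective (g := fun x (v : {v : Fin n // v ≠ i}) => x v) fun y => ?_
  funext v
  exact contrLift_of_ne hij y v.2

theorem contrLift_restrict {x : Fin n → ℤ} (hx : x j = x i + g) :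
    contrLift i j hij g (fun v => x v) = x := by
  funext v
  by_cases hv : v = i
  · subst hv
    rw [contrLift_self]
    show x j - g = x v
    omega
  · exact contrLift_of_ne hij _ hv

theorem contrLift_right_eq_left_add (y : {v : Fin n // v ≠ i} → ℤ) :
    contrLift i j hij g y j = contrLift i j hij g y i + g := by
  rw [contrLift_self, contrLift_of_ne hij y hij.symm]
  ring

theorem contrEdge_ne_iff (y : {v : Fin n // v ≠ i} → ℤ) (e : Fin n × Fin n × ℤ) :
    y (contrEdge i j hij g e).2.1 ≠ y (contrEdge i j hij g e).1 + (contrEdge i j hij g e).2.2 ↔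
      contrLift i j hij g y e.2.1 ≠ contrLift i j hij g y e.1 + e.2.2 := by
  simp only [contrEdge, contrLift]
  omega

theorem proper_image_contrEdge_iff (y : {v : Fin n // v ≠ i} → ℤ)
    (F : Finset (Fin n × Fin n × ℤ)) :
    (∀ e ∈ F.image (contrEdge i j hij g), y e.2.1 ≠ y e.1 + e.2.2) ↔
      ∀ e ∈ F, contrLift i j hij g y e.2.1 ≠ contrLift i j hij g y e.1 + e.2.2 := by
  simp only [forall_mem_image, contrEdge_ne_iff]

theorem forall_contrHeight_lt_and_le_iff (hg : 0 ≤ g) (y : {v : Fin n // v ≠ i} → ℤ)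
    (h : Fin n → ℤ) (m : ℤ) :
    (∀ v, contrHeight i j g h v < y v ∧ y v ≤ m) ↔
      ∀ v, h v < contrLift i j hij g y v ∧ contrLift i j hij g y v ≤ m := by
  constructor
  · intro hy v
    by_cases hv : v = i
    · have := hy ⟨j, hij.symm⟩
      simp only [contrHeight, if_true, max_lt_iff] at this
      rw [hv, contrLift_self]
      omega
    · have := hy ⟨v, hv⟩
      rw [contrLift_of_ne hij y hv]
      by_cases hvj : v = j
      · subst hvj
        simp only [contrHeight, if_true, max_lt_iff] at this
        omega
      · simpa [contrHeight, hvj] using this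
  · rintro hx ⟨v, hv⟩
    have hxv := hx v
    rw [contrLift_of_ne hij y hv] at hxv
    by_cases hvj : v = j
    · subst hvj
      have hxi := hx i
      rw [contrLift_self] at hxi
      simp only [contrHeight, if_true, max_lt_iff]
      omega
    · simpa [contrHeight, hvj] using hxv

theorem image_contrLift_rootedColorings (hg : 0 ≤ g) (F : Finset (Fin n × Fin n × ℤ))
    (h : Fin n → ℤ) (m : ℤ) :
    contrLift i j hij g '' rootedColorings (F.image (contrEdge i j hij g)) (contrHeight i j g h) m =
      rootedColorings F h m ∩ {x | x j = x i + g} := by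
  ext x
  constructor
  · rintro ⟨y, ⟨hbd, hedges⟩, rfl⟩
    exact ⟨⟨(forall_contrHeight_lt_and_le_iff hij hg y h m).1 hbd,
      (proper_image_contrEdge_iff hij y F).1 hedges⟩, contrLift_right_eq_left_add hij y⟩
  · rintro ⟨⟨hbd, hedges⟩, hx⟩
    have hlift := contrLift_restrict hij hx
    rw [← hlift] at hbd hedges
    exact ⟨_, ⟨(forall_contrHeight_lt_and_le_iff hij hg _ h m).2 hbd,
      (proper_image_contrEdge_iff hij _ F).2 hedges⟩, hlift⟩

theorem rootedChi_erase_eq_add_rootedChi_contr (hg : 0 ≤ g) {E : Finset (Fin n × Fin n × ℤ)}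
    (he : (i, j, g) ∈ E) (h : Fin n → ℤ) (m : ℤ) :
    rootedChi (E.erase (i, j, g)) h m =
      rootedChi E h m +
        rootedChi ((E.erase (i, j, g)).image (contrEdge i j hij g)) (contrHeight i j g h) m := by
  rw [rootedChi_eq_ncard, rootedChi_eq_ncard, rootedChi_eq_ncard,
    ← Set.ncard_image_of_injective _ (contrLift_injective hij),
    image_contrLift_rootedColorings hij hg]
  exact ncard_rootedColorings_erase he h m

end Contraction

theorem rooted_deletion_contraction_general (n : ℕ)
    (E : Finset (Fin n × Fin n × ℤ)) (h : Fin n → ℤ)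
    (i j : Fin n) (g : ℤ) (hij : i ≠ j) (hg : 0 ≤ g) (he : (i, j, g) ∈ E) (m : ℤ) :
    (rootedChi E h m : ℤ) =
      (rootedChi (E.erase (i, j, g)) h m : ℤ) -
      (rootedChi
        ((E.erase (i, j, g)).image fun e =>
          (contrMap i j hij e.1, contrMap i j hij e.2.1,
            e.2.2 + contrEta i g e.2.1 - contrEta i g e.1))
        (fun v : {v : Fin n // v ≠ i} =>
          if (v : Fin n) = j then max (h j) (h i + g) else h (v : Fin n))
        m : ℤ) :=
  eq_sub_of_add_eq <| by
    exact_mod_cast (rootedChi_erase_eq_add_rootedChi_contr hij hg he h m).symm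

/-- **Theorem 3.4** (deletion–contraction for rooted integral gain graphs).
For a rooted integral gain graph `(E, h)` on `{1, …, n}` and a nonloop edge `e = (i, j, g) ∈ E`
with `g ≥ 0`, the number of proper rooted `m`-colorations satisfies
`χ(E, h, m) = χ(E ∖ {e}, h, m) − χ(E/e, h', m)`, where `E/e` lives on the vertex set
`{1, …, n} ∖ {i}`, its edges are `(q u, q v, g' + η v − η u)` for `(u, v, g') ∈ E ∖ {e}`, and
`h' j = max (h j) (h i + g)` while `h' v = h v` for `v ≠ j`. -/
theorem rooted_deletion_contraction (n : ℕ) (hn : 1 ≤ n)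
    (E : Finset (Fin n × Fin n × ℤ)) (h : Fin n → ℤ)
    (i j : Fin n) (g : ℤ) (hij : i ≠ j) (hg : 0 ≤ g) (he : (i, j, g) ∈ E) (m : ℤ) :
    (rootedChi E h m : ℤ) =
      (rootedChi (E.erase (i, j, g)) h m : ℤ) -
      (rootedChi
        ((E.erase (i, j, g)).image fun e =>
          (contrMap i j hij e.1, contrMap i j hij e.2.1,
            e.2.2 + contrEta i g e.2.1 - contrEta i g e.1))
        (fun v : {v : Fin n // v ≠ i} =>
          if (v : Fin n) = j then max (h j) (h i + g) else h (v : Fin n))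
        m : ℤ) :=
  rooted_deletion_contraction_general n E h i j g hij hg he m
end

section
/- Corollary 5.1 (interval graph coloring). Let G be a simple graph on a finite vertex set V, let h : V → ℤ, and let m be an integer. Then χ_{G,h}(m) = ∑_{π ∈ Π(G)} μ(0̂, π) · ∏_{W ∈ π} (m − h(W))⁺, where h(W) := max{ h_v : v ∈ W }. -/
open Finset
open scoped Classical

/-- The number of proper colorations of the graph `G` in which vertex `v` receives a color
from the interval `(h v, m]`. -/
noncomputable def intervalChromatic {V : Type*} [Fintype V] (G : SimpleGraph V) (h : V → ℤ)
    (m : ℤ) : ℕ :=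
  Nat.card {x : V → ℤ // (∀ v, h v < x v ∧ x v ≤ m) ∧ ∀ u v, G.Adj u v → x u ≠ x v}

/-- `P` is a partition of the vertex set of `G` each of whose blocks induces a connected
subgraph of `G`.  (Partitions are represented as the finite set of their blocks.) -/
def IsConnPartition {V : Type*} [Fintype V] (G : SimpleGraph V) (P : Finset (Finset V)) : Prop :=
  (∀ W ∈ P, W.Nonempty) ∧ (∀ v : V, ∃! W, W ∈ P ∧ v ∈ W) ∧
    ∀ W ∈ P, (G.induce (W : Set V)).Connected

/-- The poset `Π(G)` of partitions of `V` whose blocks induce connected subgraphs of `G`. -/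
noncomputable def connPartitions {V : Type*} [Fintype V] [DecidableEq V] (G : SimpleGraph V) :
    Finset (Finset (Finset V)) :=
  Finset.univ.filter fun P => IsConnPartition G P

/-! For a colouring `x` in the box `∏ v, (h v, m]`, let `σ(x)` be the partition of `V` into the
connected components of the subgraph of `G` formed by the edges whose ends get equal colours.
For a connected partition `π`, the colouring `x` is constant on the blocks of `π` iff `π` refines
`σ(x)`, and there are `∏_{W ∈ π} (m - h(W))⁺` such colourings. Summing `μ(0̂, π)` over the `π`
refining `σ(x)` gives `[σ(x) = 0̂]`, which is `1` exactly when `x` is proper. -/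

namespace SimpleGraph

variable {V α : Type*} (G : SimpleGraph V) (x : V → α)

def monochromatic : SimpleGraph V where
  Adj u v := G.Adj u v ∧ x u = x v
  symm := ⟨fun _ _ h => ⟨h.1.symm, h.2.symm⟩⟩
  loopless := ⟨fun v h => G.loopless.irrefl v h.1⟩

lemma monochromatic_le : G.monochromatic x ≤ G := fun _ _ h => h.1

variable {G x}

lemma Reachable.apply_eq_of_monochromatic {u v : V}
    (huv : (G.monochromatic x).Reachable u v) : x u = x v := by
  obtain ⟨p⟩ := huv
  induction p with
  | nil => rfl
  | cons hadj _ ih => exact hadj.2.trans ih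

lemma monochromatic_eq_bot_iff : G.monochromatic x = ⊥ ↔ ∀ u v, G.Adj u v → x u ≠ x v := by
  simp only [eq_bot_iff_forall_not_adj, monochromatic, not_and]

lemma mem_supp_toFinset_connectedComponentMk {H : SimpleGraph V} {u v : V}
    [Fintype (H.connectedComponentMk v).supp] :
    u ∈ (H.connectedComponentMk v).supp.toFinset ↔ H.Reachable v u := by
  rw [Set.mem_toFinset, ConnectedComponent.mem_supp_iff, ConnectedComponent.eq, reachable_comm]

end SimpleGraph

open SimpleGraph

section ColorComponents

variable {V α : Type*} [Fintype V] [DecidableEq V] {G : SimpleGraph V} {x : V → α}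

/-- The partition `σ(x)`: the coarsest connected partition on whose blocks `x` is constant. -/
noncomputable def colorComponents (G : SimpleGraph V) (x : V → α) : Finset (Finset V) :=
  univ.image fun v => ((G.monochromatic x).connectedComponentMk v).supp.toFinset

lemma mem_colorComponents {W : Finset V} :
    W ∈ colorComponents G x ↔
      ∃ v, ((G.monochromatic x).connectedComponentMk v).supp.toFinset = W := by
  simp [colorComponents]

lemma component_mem_colorComponents (v : V) :
    ((G.monochromatic x).connectedComponentMk v).supp.toFinset ∈ colorComponents G x :=
  mem_colorComponents.2 ⟨v, rfl⟩

lemma isConnPartition_colorComponents (G : SimpleGraph V) (x : V → α) :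
    IsConnPartition G (colorComponents G x) := by
  refine ⟨?_, fun v => ⟨_, ⟨component_mem_colorComponents v,
    mem_supp_toFinset_connectedComponentMk.2 .rfl⟩, ?_⟩, ?_⟩
  · rintro _ hW
    obtain ⟨v, rfl⟩ := mem_colorComponents.1 hW
    exact ⟨v, mem_supp_toFinset_connectedComponentMk.2 .rfl⟩
  · rintro _ ⟨hW, hv⟩
    obtain ⟨u, rfl⟩ := mem_colorComponents.1 hW
    rw [ConnectedComponent.eq.2 (mem_supp_toFinset_connectedComponentMk.1 hv)]
  · rintro _ hW
    obtain ⟨v, rfl⟩ := mem_colorComponents.1 hW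
    rw [Set.coe_toFinset]
    exact (ConnectedComponent.maximal_connected_induce_supp _).1.mono
      (comap_monotone _ (G.monochromatic_le x))

lemma exists_subset_colorComponents_iff {W : Finset V}
    (hW : (G.induce (W : Set V)).Connected) :
    (∃ U ∈ colorComponents G x, W ⊆ U) ↔ ∀ u ∈ W, ∀ v ∈ W, x u = x v := by
  constructor
  · rintro ⟨_, hU, hWU⟩ u hu v hv
    obtain ⟨w, rfl⟩ := mem_colorComponents.1 hU
    exact (mem_supp_toFinset_connectedComponentMk.1 (hWU hu)).apply_eq_of_monochromatic.symm.trans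
      (mem_supp_toFinset_connectedComponentMk.1 (hWU hv)).apply_eq_of_monochromatic
  · intro hconst
    obtain ⟨⟨v, hv⟩⟩ := hW.nonempty
    let toMonochromatic : G.induce (W : Set V) →g G.monochromatic x :=
      ⟨Subtype.val, fun {a b} hab => ⟨hab, hconst _ a.2 _ b.2⟩⟩
    refine ⟨_, component_mem_colorComponents v,
      fun u hu => mem_supp_toFinset_connectedComponentMk.2 ?_⟩
    exact (hW.preconnected ⟨v, hv⟩ ⟨u, hu⟩).map toMonochromatic

lemma refines_colorComponents_iff {P : Finset (Finset V)} (hP : IsConnPartition G P) :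
    (∀ W ∈ P, ∃ U ∈ colorComponents G x, W ⊆ U) ↔ ∀ W ∈ P, ∀ u ∈ W, ∀ v ∈ W, x u = x v :=
  forall₂_congr fun W hW => exists_subset_colorComponents_iff (hP.2.2 W hW)

lemma colorComponents_eq_singletons_iff :
    colorComponents G x = univ.image (fun v : V => ({v} : Finset V)) ↔
      ∀ u v, G.Adj u v → x u ≠ x v := by
  rw [← monochromatic_eq_bot_iff]
  constructor
  · intro hσ
    refine eq_bot_iff_forall_not_adj.2 fun u v huv => huv.ne ?_
    have hmem := component_mem_colorComponents (G := G) (x := x) u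
    rw [hσ] at hmem
    obtain ⟨w, -, hw⟩ := mem_image.1 hmem
    have hu := mem_supp_toFinset_connectedComponentMk.2 (Reachable.refl (G := G.monochromatic x) u)
    have hv := mem_supp_toFinset_connectedComponentMk.2 huv.reachable
    rw [← hw, mem_singleton] at hu hv
    rw [hu, hv]
  · intro hbot
    refine image_congr fun v _ => ?_
    ext u
    rw [mem_supp_toFinset_connectedComponentMk, hbot, reachable_bot, mem_singleton, eq_comm]

end ColorComponents

lemma card_filter_piFinset_constant_on_blocks {ι β : Type*} [Fintype ι] [DecidableEq ι]
    [DecidableEq β] {P : Finset (Finset ι)} (hne : ∀ W ∈ P, W.Nonempty)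
    (hcover : ∀ i, ∃! W, W ∈ P ∧ i ∈ W) (S : ι → Finset β) (T : Finset ι → Finset β)
    (hT : ∀ W ∈ P, ∀ b, b ∈ T W ↔ ∀ i ∈ W, b ∈ S i) :
    #{x ∈ Fintype.piFinset S | ∀ W ∈ P, ∀ i ∈ W, ∀ j ∈ W, x i = x j} = ∏ W ∈ P, #(T W) := by
  choose rep hrep using hne
  choose block hblock hblock_unique using hcover
  have block_eq {i W} (hW : W ∈ P) (hi : i ∈ W) : block i = W :=
    (hblock_unique i W ⟨hW, hi⟩).symm
  rw [← card_pi]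
  refine card_bij' (fun x _ W hW => x (rep W hW)) (fun f _ i => f (block i) (hblock i).1)
    ?_ ?_ ?_ ?_
  · intro x hx
    simp only [mem_filter, Fintype.mem_piFinset] at hx
    exact mem_pi.2 fun W hW => (hT W hW _).2 fun i hi => hx.2 W hW i hi _ (hrep W hW) ▸ hx.1 i
  · intro f hf
    rw [mem_pi] at hf
    simp only [mem_filter, Fintype.mem_piFinset]
    refine ⟨fun i => (hT _ (hblock i).1 _).1 (hf _ _) i (hblock i).2, ?_⟩
    intro W hW i hi j hj
    simp only [block_eq hW hi, block_eq hW hj]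
  · intro x hx
    funext i
    exact (mem_filter.1 hx).2 _ (hblock i).1 _ (hrep _ _) i (hblock i).2
  · intro f _
    funext W hW
    simp only [block_eq hW (hrep W hW)]

lemma mem_Ioc_sup'_iff {ι α : Type*} [LinearOrder α] [LocallyFiniteOrder α] {W : Finset ι}
    (hW : W.Nonempty) (f : ι → α) {a b : α} :
    a ∈ Ioc (W.sup' hW f) b ↔ ∀ i ∈ W, a ∈ Ioc (f i) b := by
  simp only [mem_Ioc, sup'_lt_iff]
  exact ⟨fun ha i hi => ⟨ha.1 i hi, ha.2⟩,
    fun ha => ⟨fun i hi => (ha i hi).1, (ha _ hW.choose_spec).2⟩⟩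

/-- Möbius inversion along a map `σ` into a finite poset with bottom element `bot`. -/
lemma sum_mul_card_filter_le_eq_card {α X R : Type*} [Semiring R] [DecidableEq α]
    {s : Finset α} (le : α → α → Prop) [DecidableRel le] (μ : α → R) (bot : α)
    (hμ : ∀ P ∈ s, ∑ Q ∈ s with le Q P, μ Q = if P = bot then 1 else 0)
    (A : Finset X) (σ : X → α) (hσ : ∀ x ∈ A, σ x ∈ s) :
    ∑ P ∈ s, μ P * #{x ∈ A | le P (σ x)} = #{x ∈ A | σ x = bot} := by
  calc ∑ P ∈ s, μ P * #{x ∈ A | le P (σ x)}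
      = ∑ x ∈ A, ∑ Q ∈ s with le Q (σ x), μ Q := by
        simp_rw [card_filter, Nat.cast_sum, mul_sum, Nat.cast_ite, Nat.cast_one, Nat.cast_zero,
          mul_ite, mul_one, mul_zero, sum_filter]
        exact sum_comm
    _ = ∑ x ∈ A, if σ x = bot then 1 else 0 := sum_congr rfl fun x hx => hμ _ (hσ x hx)
    _ = #{x ∈ A | σ x = bot} := sum_boole _ _

lemma intervalChromatic_eq_card {V : Type*} [Fintype V] [DecidableEq V] (G : SimpleGraph V)
    (h : V → ℤ) (m : ℤ) :
    intervalChromatic G h m =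
      #{x ∈ Fintype.piFinset fun v => Ioc (h v) m | ∀ u v, G.Adj u v → x u ≠ x v} := by
  rw [intervalChromatic, ← Nat.card_eq_finsetCard]
  refine Nat.card_congr (Equiv.subtypeEquivRight fun x => ?_)
  simp only [mem_filter, Fintype.mem_piFinset, mem_Ioc]

/-- **Corollary 5.1** (interval graph coloring).  For a simple graph `G` on a finite vertex set,
`h : V → ℤ`, and an integer `m`, the number of proper colorations with `x v ∈ (h v, m]` equals
`∑_{π ∈ Π(G)} μ(0̂, π) ∏_{W ∈ π} (m − h(W))⁺`, where `h(W) = max_{v ∈ W} h v`.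
Here `mu` is the Möbius function of the refinement poset `Π(G)` with bottom element the
partition into singletons (characterized by `hmu`), and `hmax W = max_{v ∈ W} h v`
(characterized by `hhmax`). -/
theorem interval_graph_coloring {V : Type*} [Fintype V] [DecidableEq V]
    (G : SimpleGraph V) (h : V → ℤ) (m : ℤ)
    (mu : Finset (Finset V) → ℤ)
    (hmu : ∀ P ∈ connPartitions G,
      ∑ Q ∈ (connPartitions G).filter (fun Q => ∀ W ∈ Q, ∃ U ∈ P, W ⊆ U), mu Q =
        if P = Finset.univ.image (fun v : V => ({v} : Finset V)) then 1 else 0)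
    (hmax : Finset V → ℤ)
    (hhmax : ∀ W : Finset V, ∀ hW : W.Nonempty, hmax W = W.sup' hW h) :
    (intervalChromatic G h m : ℤ) =
      ∑ P ∈ connPartitions G, mu P * ∏ W ∈ P, max (m - hmax W) 0 := by
  rw [intervalChromatic_eq_card]
  set box := Fintype.piFinset fun v => Ioc (h v) m
  have hcount : ∀ P ∈ connPartitions G, ∏ W ∈ P, max (m - hmax W) 0 =
      (#{x ∈ box | ∀ W ∈ P, ∃ U ∈ colorComponents G x, W ⊆ U} : ℤ) := by
    intro P hP
    have hPconn := (mem_filter.1 hP).2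
    obtain ⟨hne, hcover, -⟩ := id hPconn
    have hblock (W) (hW : W ∈ P) (c : ℤ) : c ∈ Ioc (hmax W) m ↔ ∀ v ∈ W, c ∈ Ioc (h v) m := by
      rw [hhmax W (hne W hW), mem_Ioc_sup'_iff]
    simp only [refines_colorComponents_iff hPconn]
    rw [card_filter_piFinset_constant_on_blocks hne hcover (fun v => Ioc (h v) m) _ hblock]
    simp only [Nat.cast_prod, Int.card_Ioc, Int.toNat_eq_max]
  rw [sum_congr rfl fun P hP => by rw [hcount P hP],
    sum_mul_card_filter_le_eq_card _ mu _ hmu box _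
      fun x _ => mem_filter.2 ⟨mem_univ _, isConnPartition_colorComponents G x⟩]
  simp only [colorComponents_eq_singletons_iff]
end

section
/- Deletion–contraction for the modular chromatic function (end of Section 6). Let n ≥ 1, let E be a finite set of triples (u,v,g') with u,v ∈ {1,…,n} and g' ∈ ℤ, let m ≥ 1, and let χ^mod(E,m) be the number of maps x : {1,…,n} → ℤ/mℤ with x_v ≠ x_u + g' (mod m) for all (u,v,g') ∈ E. Let e = (i,j,g) ∈ E with i ≠ j. Define η : {1,…,n} → ℤ by η_i = g and η_v = 0 for v ≠ i; define q(i) = j and q(v) = v otherwise; and let E/e := { (q(u), q(v), g' + η_v − η_u) : (u,v,g') ∈ E ∖ {e} }, a finite set of triples on the vertex set V' := {1,…,n}∖{i}. Then χ^mod(E,m) = χ^mod(E∖{e},m) − χ^mod(E/e,m), where χ^mod(E/e,m) is the analogous count of maps x : V' → ℤ/mℤ. -/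
open Finset
open scoped Classical

/-- The number of proper modular colorations of the integral gain graph `E` on the finite
vertex set `V` with colors in `ℤ/mℤ`: maps `x : V → ℤ/mℤ` with `x v ≠ x u + g' (mod m)` for
every edge `(u, v, g') ∈ E`. -/
noncomputable def modChi {V : Type*} [Fintype V] (E : Finset (V × V × ℤ)) (m : ℕ) : ℕ :=
  Nat.card {x : V → ZMod m // ∀ e ∈ E, x e.2.1 ≠ x e.1 + (e.2.2 : ZMod m)}

/-! A coloring proper for `E ∖ {e}` either is proper for `E` or makes `e = (i, j, g)` tight,
`x j = x i + g`. A tight coloring is determined by its values off `i`, and switching it by `η`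
turns it into a coloring of `E/e`; since switching shifts both sides of every edge condition by the
same amount, properness for `E ∖ {e}` corresponds exactly to properness for `E/e`. -/
theorem Nat.card_subtype_eq_card_and_add_card_and_not {α : Type*} [Finite α]
    (p q : α → Prop) :
    Nat.card {x // p x} = Nat.card {x // p x ∧ q x} + Nat.card {x // p x ∧ ¬ q x} := by
  have := Fintype.ofFinite α
  simp only [Nat.card_eq_fintype_card, Fintype.card_subtype, ← Finset.filter_filter]
  exact (Finset.card_filter_add_card_filter_not _).symm

section GainGraph

variable {V W : Type*} {m : ℕ}

def IsProperModColoring (E : Finset (V × V × ℤ)) (x : V → ZMod m) : Prop :=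
  ∀ e ∈ E, x e.2.1 ≠ x e.1 + (e.2.2 : ZMod m)

theorem modChi_eq_card [Fintype V] (E : Finset (V × V × ℤ)) :
    modChi E m = Nat.card {x : V → ZMod m // IsProperModColoring E x} := rfl

theorem isProperModColoring_iff_erase [DecidableEq V] {E : Finset (V × V × ℤ)} {e : V × V × ℤ}
    (he : e ∈ E) (x : V → ZMod m) :
    IsProperModColoring E x ↔
      IsProperModColoring (E.erase e) x ∧ ¬ x e.2.1 = x e.1 + (e.2.2 : ZMod m) := by
  refine ⟨fun h => ⟨fun f hf => h f (Finset.mem_of_mem_erase hf), h e he⟩, ?_⟩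
  rintro ⟨hE, he'⟩ f hf
  rcases eq_or_ne f e with rfl | hne
  · exact he'
  · exact hE f (Finset.mem_erase.mpr ⟨hne, hf⟩)

theorem modChi_erase [Fintype V] [DecidableEq V] [NeZero m] {E : Finset (V × V × ℤ)}
    {e : V × V × ℤ} (he : e ∈ E) :
    modChi (E.erase e) m = Nat.card {x : V → ZMod m //
        IsProperModColoring (E.erase e) x ∧ x e.2.1 = x e.1 + (e.2.2 : ZMod m)} +
      modChi E m := by
  rw [modChi_eq_card, modChi_eq_card, Nat.card_subtype_eq_card_and_add_card_and_not _
    (fun x : V → ZMod m => x e.2.1 = x e.1 + (e.2.2 : ZMod m))]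
  congr 1
  exact Nat.card_congr (Equiv.subtypeEquivRight fun x => (isProperModColoring_iff_erase he x).symm)

abbrev switchContract (q : V → W) (η : V → ℤ) (e : V × V × ℤ) : W × W × ℤ :=
  (q e.1, q e.2.1, e.2.2 + η e.2.1 - η e.1)

theorem isProperModColoring_image_switchContract_iff [DecidableEq W] {q : V → W} {η : V → ℤ}
    {x : V → ZMod m} {y : W → ZMod m} (hxy : ∀ v, y (q v) = x v + (η v : ZMod m))
    (E : Finset (V × V × ℤ)) :
    IsProperModColoring (E.image (switchContract q η)) y ↔ IsProperModColoring E x := by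
  simp only [IsProperModColoring, Finset.forall_mem_image, hxy]
  refine forall₂_congr fun f _ => not_congr ?_
  push_cast
  constructor <;> intro h <;> linear_combination h

end GainGraph

section Contraction

variable {n m : ℕ} {i j : Fin n} (hij : i ≠ j) (g : ℤ)

theorem contrMap_of_ne {v : Fin n} (hv : v ≠ i) : contrMap i j hij v = ⟨v, hv⟩ := dif_neg hv

theorem contrEta_of_ne {v : Fin n} (hv : v ≠ i) : contrEta i g v = 0 := if_neg hv

theorem apply_contrMap_eq_add_contrEta {x : Fin n → ZMod m} (hx : x j = x i + (g : ZMod m))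
    (v : Fin n) :
    x (contrMap i j hij v) = x v + (contrEta i g v : ZMod m) := by
  by_cases hv : v = i
  · subst hv
    simp [contrMap, contrEta, hx]
  · simp [contrMap_of_ne hij hv, contrEta_of_ne g hv]

def tightColoringEquiv :
    {x : Fin n → ZMod m // x j = x i + (g : ZMod m)} ≃ ({v : Fin n // v ≠ i} → ZMod m) where
  toFun x v := x.1 v
  invFun y := ⟨fun v => y (contrMap i j hij v) - (contrEta i g v : ZMod m), by
    simp [contrMap, contrEta, hij.symm]⟩
  left_inv x := by
    ext v
    simp [apply_contrMap_eq_add_contrEta hij g x.2]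
  right_inv y := by
    ext v
    simp [contrMap_of_ne hij v.2, contrEta_of_ne g v.2]

theorem card_tight_eq_modChi_contract (E : Finset (Fin n × Fin n × ℤ)) :
    Nat.card {x : Fin n → ZMod m //
        IsProperModColoring E x ∧ x j = x i + (g : ZMod m)} =
      modChi (E.image (switchContract (contrMap i j hij) (contrEta i g))) m :=
  Nat.card_congr <| (Equiv.subtypeEquivRight fun _ => and_comm).trans <|
    (Equiv.subtypeSubtypeEquivSubtypeInter _ _).symm.trans <|
    Equiv.subtypeEquiv (tightColoringEquiv hij g) fun x =>
      (isProperModColoring_image_switchContract_iff (q := contrMap i j hij)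
        (y := tightColoringEquiv hij g x) (apply_contrMap_eq_add_contrEta hij g x.2) E).symm

end Contraction

theorem modular_deletion_contraction_general (n : ℕ)
    (E : Finset (Fin n × Fin n × ℤ)) (m : ℕ) (hm : 1 ≤ m)
    (i j : Fin n) (g : ℤ) (hij : i ≠ j) (he : (i, j, g) ∈ E) :
    (modChi E m : ℤ) =
      (modChi (E.erase (i, j, g)) m : ℤ) -
      (modChi
        ((E.erase (i, j, g)).image fun e =>
          (contrMap i j hij e.1, contrMap i j hij e.2.1,
            e.2.2 + contrEta i g e.2.1 - contrEta i g e.1))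
        m : ℤ) := by
  have : NeZero m := ⟨by omega⟩
  rw [modChi_erase he, ← card_tight_eq_modChi_contract hij g]
  push_cast
  ring

/-- **Deletion–contraction for the modular chromatic function** (end of Section 6).
For an integral gain graph `E` on `{1, …, n}`, a modulus `m ≥ 1`, and a nonloop edge
`e = (i, j, g) ∈ E`, the number of proper modular colorations satisfies
`χ^mod(E, m) = χ^mod(E ∖ {e}, m) − χ^mod(E/e, m)`, where `E/e` lives on the vertex set
`{1, …, n} ∖ {i}` and its edges are `(q u, q v, g' + η v − η u)` for `(u, v, g') ∈ E ∖ {e}`. -/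
theorem modular_deletion_contraction (n : ℕ) (hn : 1 ≤ n)
    (E : Finset (Fin n × Fin n × ℤ)) (m : ℕ) (hm : 1 ≤ m)
    (i j : Fin n) (g : ℤ) (hij : i ≠ j) (he : (i, j, g) ∈ E) :
    (modChi E m : ℤ) =
      (modChi (E.erase (i, j, g)) m : ℤ) -
      (modChi
        ((E.erase (i, j, g)).image fun e =>
          (contrMap i j hij e.1, contrMap i j hij e.2.1,
            e.2.2 + contrEta i g e.2.1 - contrEta i g e.1))
        m : ℤ) :=
  modular_deletion_contraction_general n E m hm i j g hij he
end

section
/- Shi arrangement count (Equation 4). For all integers n ≥ 1 and m ≥ 0: N_{[0,1]}(n,m) = (m − n + 1)^n if m ≥ n, and N_{[0,1]}(n,m) = 0 if m < n. Equivalently, the number of integer points of [1,m]^n lying on none of the hyperplanes x_j = x_i and x_j = x_i + 1 (1 ≤ i < j ≤ n) of the Shi arrangement is (m − n + 1)^n when m ≥ n and 0 otherwise. -/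
open Finset

/-- `latticeCount a b n m` is `N_{[a,b]}(n,m)`: the number of maps `x : {1, …, n} → ℤ` with
`1 ≤ x i ≤ m` for all `i` and `x j ≠ x i + g` for all `i < j` and all gains `g` with
`a ≤ g ≤ b`.  Equivalently, the number of integer points of the cube `[1, m]^n` lying on none
of the affinographic hyperplanes `x j = x i + g` (`i < j`, `a ≤ g ≤ b`). -/
noncomputable def latticeCount (a b : ℤ) (n : ℕ) (m : ℤ) : ℕ :=
  Nat.card {x : Fin n → ℤ // (∀ v, 1 ≤ x v ∧ x v ≤ m) ∧
    ∀ i j : Fin n, i < j → ∀ g : ℤ, a ≤ g → g ≤ b → x j ≠ x i + g}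

/-- `eulerianNumber n r` is the Eulerian number `A(n, r + 1)`: the number of permutations `σ`
of `{1, …, n}` with exactly `r` ascents, an ascent being an index `1 ≤ i ≤ n − 1` with
`σ(i) < σ(i+1)`. -/
noncomputable def eulerianNumber (n r : ℕ) : ℕ :=
  Nat.card {σ : Equiv.Perm (Fin n) //
    Nat.card {i : ℕ // ∃ h1 : i + 1 < n,
      σ ⟨i, Nat.lt_of_succ_lt h1⟩ < σ ⟨i + 1, h1⟩} = r}

/-- The binomial coefficient `C(t, n)` for an integer `t`, interpreted as `0` when `t < n`
(in particular when `t < 0`). -/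
def intChoose (t : ℤ) (n : ℕ) : ℕ := t.toNat.choose n

/-!
Write `x` for a point of the cube avoiding the Shi hyperplanes. Its coordinates are distinct, so
subtracting from each `x i` the number of coordinates below it gives a point `z` of the smaller
cube `[1, m - n + 1]^n`. Conversely, sort the coordinates of any such `z` by decreasing value,
breaking ties by increasing index, and add to each `z i` the number of coordinates after it in
this order. The two maps are mutually inverse: two coordinates of `x` at distance one must have
the later one below, which is exactly how the ties of `z` are broken.
-/

namespace ShiArrangement

section Rank

variable {ι α β : Type*} [Fintype ι] [LinearOrder α] [LinearOrder β]

def rank (f : ι → α) (i : ι) : ℕ := #{j | f j < f i}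

theorem rank_lt_rank {f : ι → α} {i j : ι} (h : f j < f i) : rank f j < rank f i := by
  refine card_lt_card ((ssubset_iff_of_subset fun k hk => ?_).2 ⟨j, ?_, ?_⟩)
  · simp only [mem_filter, mem_univ, true_and] at hk ⊢
    exact hk.trans h
  · simpa using h
  · simp

theorem rank_lt_card (f : ι → α) (i : ι) : rank f i < Fintype.card ι :=
  card_lt_univ_of_notMem (x := i) (by simp)

theorem rank_congr {f : ι → α} {g : ι → β} {i : ι} (h : ∀ j, f j < f i ↔ g j < g i) :
    rank f i = rank g i := by
  simp only [rank, h]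

theorem rank_eq_rank_add {f : ι → α} {i j : ι} (h : f j ≤ f i) :
    rank f i = rank f j + #{k | f j ≤ f k ∧ f k < f i} := by
  rw [rank, ← card_filter_add_card_filter_not (s := {k | f k < f i}) (fun k => f k < f j),
    filter_filter, filter_filter, rank]
  congr 2 <;> ext k <;> simp only [mem_filter, mem_univ, true_and, not_lt]
  · exact ⟨fun h' => h'.2, fun h' => ⟨h'.trans_le h, h'⟩⟩
  · exact and_comm

end Rank

theorem lt_iff_lt_of_injective_of_lt_imp {ι α β : Type*} [LinearOrder α] [Preorder β]
    {f : ι → α} {g : ι → β} (hf : Function.Injective f) (h : ∀ i j, f i < f j → g i < g j)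
    {i j : ι} : f i < f j ↔ g i < g j := by
  refine ⟨h i j, fun hg => ?_⟩
  by_contra hlt
  rcases (not_lt.1 hlt).lt_or_eq with hji | hji
  · exact lt_asymm hg (h j i hji)
  · exact lt_irrefl _ (hf hji ▸ hg)

theorem card_le_of_injective_of_mapsTo_Icc {ι : Type*} {x : ι → ℤ} (hx : Function.Injective x)
    {s : Finset ι} {a b : ℤ} (h : ∀ k ∈ s, x k ∈ Icc a b) : #s ≤ (b + 1 - a).toNat :=
  Int.card_Icc a b ▸ card_le_card_of_injOn x h hx.injOn

variable {ι : Type*} [LinearOrder ι]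

def IsShiFree (x : ι → ℤ) : Prop :=
  ∀ i j, i < j → ∀ g : ℤ, 0 ≤ g → g ≤ 1 → x j ≠ x i + g

/-- Sorting by `key z` is sorting by value, ties broken by *decreasing* index. -/
def key (z : ι → ℤ) (i : ι) : ℤ ×ₗ ιᵒᵈ := toLex (z i, OrderDual.toDual i)

theorem key_lt_key {z : ι → ℤ} {i j : ι} : key z j < key z i ↔ z j < z i ∨ z j = z i ∧ i < j :=
  Prod.Lex.toLex_lt_toLex

omit [LinearOrder ι] in
theorem key_injective (z : ι → ℤ) : Function.Injective (key z) := fun _ _ h =>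
  OrderDual.toDual.injective (congrArg (fun p => (ofLex p).2) h)

theorem IsShiFree.injective {x : ι → ℤ} (hx : IsShiFree x) : Function.Injective x := by
  intro i j hij
  by_contra hne
  rcases lt_or_gt_of_ne hne with h | h
  · exact hx i j h 0 le_rfl zero_le_one (by omega)
  · exact hx j i h 0 le_rfl zero_le_one (by omega)

theorem IsShiFree.lt_of_eq_add_one {x : ι → ℤ} (hx : IsShiFree x) {a b : ι}
    (h : x b = x a + 1) : b < a := by
  rcases lt_trichotomy a b with hab | rfl | hab
  · exact absurd h (hx a b hab 1 zero_le_one le_rfl)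
  · omega
  · exact hab

/-- Walking up through consecutive values of `x`, the index strictly decreases at every step. -/
theorem IsShiFree.lt_of_Ioo_subset_range {x : ι → ℤ} (hx : IsShiFree x) {i j : ι}
    (hlt : x j < x i) (hfull : ∀ v, x j < v → v < x i → v ∈ Set.range x) : i < j := by
  suffices ∀ v, x j + 1 ≤ v → ∀ k, x k = v → v ≤ x i → k < j from this _ hlt _ rfl le_rfl
  intro v hv
  induction v, hv using Int.leInduction with
  | base => exact fun k hk _ => hx.lt_of_eq_add_one hk
  | succ v hv ih =>
    intro k hk hvi
    obtain ⟨k', hk'⟩ := hfull v (by omega) (by omega)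
    exact (hx.lt_of_eq_add_one (hk.trans (congrArg (· + 1) hk'.symm))).trans
      (ih k' hk' (by omega))

variable [Fintype ι]

def spread (z : ι → ℤ) (i : ι) : ℤ := z i + rank (key z) i

def compress (x : ι → ℤ) (i : ι) : ℤ := x i - rank x i

section Spread

variable {z : ι → ℤ}

theorem spread_lt_spread {i j : ι} (h : key z j < key z i) : spread z j < spread z i := by
  have hz : z j ≤ z i := by
    rcases key_lt_key.1 h with h | ⟨h, -⟩
    exacts [h.le, h.le]
  have := rank_lt_rank h
  unfold spread
  omega

theorem spread_lt_spread_iff {i j : ι} : spread z j < spread z i ↔ key z j < key z i :=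
  (lt_iff_lt_of_injective_of_lt_imp (key_injective z) fun _ _ => spread_lt_spread).symm

theorem spread_add_two_le {i j : ι} (h : z i < z j) : spread z i + 2 ≤ spread z j := by
  have := rank_lt_rank (f := key z) (key_lt_key.2 (Or.inl h))
  unfold spread
  omega

theorem isShiFree_spread (z : ι → ℤ) : IsShiFree (spread z) := by
  intro i j hij g hg0 hg1 heq
  rcases lt_or_ge (z i) (z j) with h | h
  · have := spread_add_two_le h
    omega
  · have := spread_lt_spread (key_lt_key.2 (h.lt_or_eq.imp id fun e => ⟨e, hij⟩))
    omega

theorem compress_spread (z : ι → ℤ) : compress (spread z) = z := by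
  funext i
  rw [compress, rank_congr fun j => spread_lt_spread_iff, spread]
  ring

theorem one_le_spread (hz : ∀ i, 1 ≤ z i) (i : ι) : 1 ≤ spread z i := by
  have := hz i
  unfold spread
  omega

theorem spread_le {c : ℤ} (hz : ∀ i, z i ≤ c) (i : ι) :
    spread z i ≤ c + Fintype.card ι - 1 := by
  have := hz i
  have := rank_lt_card (key z) i
  unfold spread
  omega

end Spread

section Compress

variable {x : ι → ℤ}

theorem IsShiFree.key_compress_lt (hx : IsShiFree x) {i j : ι} (h : x j < x i) :
    key (compress x) j < key (compress x) i := by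
  set mid : Finset ι := {k | x j ≤ x k ∧ x k < x i}
  have hsplit : rank x i = rank x j + #mid := rank_eq_rank_add h.le
  have hsub : mid.image x ⊆ Ico (x j) (x i) := by
    simp [mid, image_subset_iff]
  have hcard : #(mid.image x) = #mid := card_image_of_injective _ hx.injective
  have hIco := Int.card_Ico (x j) (x i)
  have hle := card_le_card hsub
  rcases (show compress x j ≤ compress x i by unfold compress; omega).lt_or_eq with hc | hc
  · exact key_lt_key.2 (Or.inl hc)
  -- equality forces every integer of `[x j, x i)` to be a value of `x`
  have himage : mid.image x = Ico (x j) (x i) :=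
    eq_of_subset_of_card_le hsub (by unfold compress at hc; omega)
  refine key_lt_key.2 (Or.inr ⟨hc, hx.lt_of_Ioo_subset_range h fun v hv hvi => ?_⟩)
  obtain ⟨k, -, hk⟩ := mem_image.1 (himage ▸ mem_Ico.2 ⟨hv.le, hvi⟩)
  exact ⟨k, hk⟩

theorem IsShiFree.spread_compress (hx : IsShiFree x) : spread (compress x) = x := by
  funext i
  rw [spread, ← rank_congr fun j =>
    lt_iff_lt_of_injective_of_lt_imp hx.injective fun _ _ => hx.key_compress_lt, compress]
  ring

theorem IsShiFree.one_le_compress (hx : IsShiFree x) (h1 : ∀ k, 1 ≤ x k) (i : ι) :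
    1 ≤ compress x i := by
  have := card_le_of_injective_of_mapsTo_Icc hx.injective (s := {k | x k < x i})
    (a := 1) (b := x i - 1) fun k hk => by
      simp only [mem_filter, mem_univ, true_and] at hk
      exact mem_Icc.2 ⟨h1 k, by omega⟩
  have := h1 i
  unfold compress rank
  omega

theorem IsShiFree.compress_le (hx : IsShiFree x) {m : ℤ} (hm : ∀ k, x k ≤ m) (i : ι) :
    compress x i ≤ m + 1 - Fintype.card ι := by
  have hge := card_le_of_injective_of_mapsTo_Icc hx.injective (s := {k | ¬x k < x i})
    (a := x i) (b := m) fun k hk => by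
      simp only [mem_filter, mem_univ, true_and] at hk
      exact mem_Icc.2 ⟨not_lt.1 hk, hm k⟩
  have hsum := card_filter_add_card_filter_not (s := univ) fun k => x k < x i
  rw [card_univ] at hsum
  have := hm i
  unfold compress rank
  omega

end Compress

variable (ι) in
def shiFreeEquivBox (m : ℤ) :
    {x : ι → ℤ // (∀ v, 1 ≤ x v ∧ x v ≤ m) ∧ IsShiFree x} ≃
      {z : ι → ℤ // ∀ i, 1 ≤ z i ∧ z i ≤ m + 1 - Fintype.card ι} where
  toFun x := ⟨compress x.1, fun i =>
    ⟨x.2.2.one_le_compress (fun k => (x.2.1 k).1) i, x.2.2.compress_le (fun k => (x.2.1 k).2) i⟩⟩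
  invFun z := ⟨spread z.1, fun i =>
    ⟨one_le_spread (fun k => (z.2 k).1) i, by have := spread_le (fun k => (z.2 k).2) i; omega⟩,
    isShiFree_spread z.1⟩
  left_inv x := Subtype.ext x.2.2.spread_compress
  right_inv z := Subtype.ext (compress_spread z.1)

end ShiArrangement

theorem Int.natCard_cube {ι : Type*} [Fintype ι] [DecidableEq ι] (c : ℤ) :
    Nat.card {z : ι → ℤ // ∀ i, 1 ≤ z i ∧ z i ≤ c} = c.toNat ^ Fintype.card ι := by
  have e : {z : ι → ℤ // ∀ i, 1 ≤ z i ∧ z i ≤ c} ≃ Icc (fun _ => (1 : ℤ)) (fun _ => c) :=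
    Equiv.subtypeEquivRight fun z => by simp [Pi.le_def, forall_and]
  rw [Nat.card_congr e, Nat.card_eq_fintype_card, Fintype.card_coe, Pi.card_Icc]
  simp

theorem latticeCount_zero_one (n : ℕ) (m : ℤ) : latticeCount 0 1 n m = (m + 1 - n).toNat ^ n :=
  calc latticeCount 0 1 n m
      = Nat.card {z : Fin n → ℤ // ∀ i, 1 ≤ z i ∧ z i ≤ m + 1 - Fintype.card (Fin n)} :=
        Nat.card_congr (ShiArrangement.shiFreeEquivBox (Fin n) m)
    _ = (m + 1 - n).toNat ^ n := by rw [Int.natCard_cube, Fintype.card_fin]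

theorem shi_count_general (n : ℕ) (hn : 1 ≤ n) (m : ℤ) :
    (latticeCount 0 1 n m : ℤ) = if (n : ℤ) ≤ m then (m - n + 1) ^ n else 0 := by
  rw [latticeCount_zero_one]
  split_ifs with h
  · rw [Nat.cast_pow, Int.toNat_of_nonneg (by omega)]
    ring
  · rw [Int.toNat_of_nonpos (by omega), zero_pow (by omega), Nat.cast_zero]

/-- **Shi arrangement count** (Equation 4).  For `n ≥ 1` and `m ≥ 0`, the number of integer
points of `[1, m]^n` lying on none of the hyperplanes `x j = x i` and `x j = x i + 1`
(`1 ≤ i < j ≤ n`) of the Shi arrangement is `(m − n + 1)^n` when `m ≥ n` and `0` otherwise. -/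
theorem shi_count (n : ℕ) (hn : 1 ≤ n) (m : ℤ) (hm : 0 ≤ m) :
    (latticeCount 0 1 n m : ℤ) = if (n : ℤ) ≤ m then (m - n + 1) ^ n else 0 :=
  shi_count_general n hn m
end

section
/- Extended Shi arrangement count. For all integers n ≥ 1, s ≥ 1, and m: N_{[−s+1, s]}(n,m) = (m − s(n−1))^n if m ≥ n + (s−1)(n−1), and N_{[−s+1, s]}(n,m) = 0 if m < n + (s−1)(n−1). Equivalently, the number of integer points of [1,m]^n lying on none of the hyperplanes x_j = x_i + g (1 ≤ i < j ≤ n, −s+1 ≤ g ≤ s) of the extended Shi arrangement S_n(s) is (m − s(n−1))^n when m ≥ n + (s−1)(n−1) and 0 otherwise. -/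
open Finset

/-!
A point of `[1, m]^n` off the extended Shi arrangement has distinct coordinates, and listed in
increasing order, consecutive values differ by at least `s`, and by at least `s + 1` when the
index increases. Subtracting `s · rank` from every coordinate therefore gives an arbitrary point of
`[1, m - s (n - 1)]^n`. The inverse sorts the new coordinates by value, breaking ties by
decreasing index, and adds `s · rank` back.
-/

open Function

namespace ExtendedShi

section Rank

variable {α β : Type*} [LinearOrder α] [LinearOrder β] {n : ℕ} {f : Fin n → α} {i j : Fin n}

def rank (f : Fin n → α) (i : Fin n) : ℕ := #{j | f j < f i}

lemma rank_lt_rank (h : f j < f i) : rank f j < rank f i :=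
  card_lt_card <| (ssubset_iff_of_subset fun l hl => by
    simp only [mem_filter, mem_univ, true_and] at hl ⊢; exact hl.trans h).2
    ⟨j, by simpa using h, by simp⟩

lemma rank_lt_card (f : Fin n → α) (i : Fin n) : rank f i < n :=
  (card_lt_card (filter_ssubset.2 ⟨i, mem_univ _, lt_irrefl (f i)⟩)).trans_eq (card_fin n)

lemma rank_eq_zero_of_forall_le (h : ∀ j, f i ≤ f j) : rank f i = 0 :=
  card_eq_zero.2 <| filter_eq_empty_iff.2 fun j _ => (h j).not_gt

lemma rank_add_one_of_forall_le (hf : Injective f) (h : ∀ j, f j ≤ f i) :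
    rank f i + 1 = n := by
  have : univ.filter (fun j => f j < f i) = univ.erase i := by
    ext j
    simp only [mem_filter, mem_univ, true_and, mem_erase, and_true]
    exact ⟨fun hj he => hj.ne (congrArg f he), fun hj => (h j).lt_of_ne (hf.ne hj)⟩
  rw [rank, this, card_erase_of_mem (mem_univ i), card_univ, Fintype.card_fin]
  exact Nat.sub_add_cancel (Fin.pos i)

lemma exists_rank_add_one (hf : Injective f) (h : f j < f i) :
    ∃ l, f j ≤ f l ∧ f l < f i ∧ rank f l + 1 = rank f i := by
  obtain ⟨l, hl, hmax⟩ := exists_max_image (univ.filter fun k => f k < f i) f ⟨j, by simpa⟩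
  simp only [mem_filter, mem_univ, true_and] at hl hmax
  refine ⟨l, hmax j h, hl, ?_⟩
  have : univ.filter (fun k => f k < f i) = insert l (univ.filter fun k => f k < f l) := by
    ext k
    simp only [mem_filter, mem_univ, true_and, mem_insert]
    refine ⟨fun hk => ?_, ?_⟩
    · rcases eq_or_ne k l with rfl | hkl
      · exact Or.inl rfl
      · exact Or.inr ((hmax k hk).lt_of_ne (hf.ne hkl))
    · rintro (rfl | hk)
      exacts [hl, hk.trans hl]
  rw [rank, rank, this, card_insert_of_notMem (by simp)]

lemma rank_eq_of_lt_imp_lt {g : Fin n → β} (hf : Injective f)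
    (h : ∀ i j, f j < f i → g j < g i) : rank g = rank f := by
  have key : ∀ i j, g j < g i ↔ f j < f i := fun i j =>
    ⟨fun hg => lt_of_not_ge fun hle => (hle.lt_or_eq.elim (fun hlt => (h j i hlt).asymm hg)
      fun he => (hf he ▸ hg).false), h i j⟩
  funext i
  simp only [rank, key]

end Rank

section Avoiding

variable {n : ℕ} {s : ℤ} {x : Fin n → ℤ} {i j : Fin n}

def ShiAvoiding (s : ℤ) (x : Fin n → ℤ) : Prop :=
  ∀ i j : Fin n, i < j → ∀ g : ℤ, -s + 1 ≤ g → g ≤ s → x j ≠ x i + g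

lemma shiAvoiding_iff :
    ShiAvoiding s x ↔ ∀ i j : Fin n, i < j → x j ≤ x i - s ∨ x i + s + 1 ≤ x j := by
  refine forall₂_congr fun i j => imp_congr_right fun _ => ⟨fun h => ?_, ?_⟩
  · by_contra! hc
    exact h (x j - x i) (by omega) (by omega) (by omega)
  · rintro h g hg₁ hg₂ he
    omega

namespace ShiAvoiding

lemma add_le_of_lt (hx : ShiAvoiding s x) (hs : 0 ≤ s) (h : x j < x i) :
    x j + s + (if j < i then 1 else 0) ≤ x i := by
  rcases lt_trichotomy j i with hji | rfl | hij
  · have := shiAvoiding_iff.1 hx j i hji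
    rw [if_pos hji]
    omega
  · exact absurd h (lt_irrefl _)
  · have := shiAvoiding_iff.1 hx i j hij
    rw [if_neg hij.not_gt]
    omega

lemma injective (hx : ShiAvoiding s x) (hs : 1 ≤ s) : Injective x := by
  intro i j he
  by_contra hne
  rcases lt_or_gt_of_ne hne with h | h
  · have := shiAvoiding_iff.1 hx i j h; omega
  · have := shiAvoiding_iff.1 hx j i h; omega

/-- Sum the gaps between consecutive values from `x j` up to `x i`; when `j < i` the index
increases at some step, which contributes the extra `1`. -/
lemma add_mul_rank_sub_le (hx : ShiAvoiding s x) (hs : 1 ≤ s) (h : x j ≤ x i) :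
    x j + s * (rank x i - rank x j) + (if j < i then 1 else 0) ≤ x i := by
  induction hr : rank x i using Nat.strong_induction_on generalizing i with
  | _ r ih =>
    subst hr
    rcases h.lt_or_eq with h | h
    · obtain ⟨l, hjl, hli, hl⟩ := exists_rank_add_one (hx.injective hs) h
      have h₁ := ih (rank x l) (by omega) hjl rfl
      have h₂ := hx.add_le_of_lt (by omega) hli
      have hstep : s * ((rank x i : ℤ) - rank x j) = s * (rank x l - rank x j) + s := by
        rw [← hl]; push_cast; ring
      rw [hstep]
      split_ifs at h₁ h₂ ⊢ <;> omega
    · obtain rfl := hx.injective hs h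
      simp

end ShiAvoiding

end Avoiding

section Bijection

variable {n : ℕ} {s m : ℤ} {i j : Fin n}

def compress (s : ℤ) (x : Fin n → ℤ) (i : Fin n) : ℤ := x i - s * rank x i

def lexKey (y : Fin n → ℤ) (i : Fin n) : ℤ ×ₗ (Fin n)ᵒᵈ := toLex (y i, OrderDual.toDual i)

def decompress (s : ℤ) (y : Fin n → ℤ) (i : Fin n) : ℤ := y i + s * rank (lexKey y) i

lemma lexKey_lt_lexKey {y : Fin n → ℤ} :
    lexKey y j < lexKey y i ↔ y j < y i ∨ y j = y i ∧ i < j :=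
  Prod.Lex.toLex_lt_toLex

lemma lexKey_injective (y : Fin n → ℤ) : Injective (lexKey y) :=
  fun _ _ h => OrderDual.toDual.injective (congrArg Prod.snd (toLex.injective h))

namespace ShiAvoiding

variable {x : Fin n → ℤ}

lemma lexKey_compress_lt (hx : ShiAvoiding s x) (hs : 1 ≤ s) (h : x j < x i) :
    lexKey (compress s x) j < lexKey (compress s x) i := by
  have hchain := hx.add_mul_rank_sub_le hs h.le
  have hji : j ≠ i := fun he => h.ne (congrArg x he)
  rw [lexKey_lt_lexKey]
  unfold compress
  rcases lt_or_gt_of_ne hji with hlt | hgt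
  · rw [if_pos hlt] at hchain
    left; linarith
  · rw [if_neg hgt.not_gt] at hchain
    rcases (show x j - s * rank x j ≤ x i - s * rank x i by linarith).lt_or_eq with hc | hc
    exacts [Or.inl hc, Or.inr ⟨hc, hgt⟩]

lemma decompress_compress (hx : ShiAvoiding s x) (hs : 1 ≤ s) :
    decompress s (compress s x) = x := by
  have hr : rank (lexKey (compress s x)) = rank x :=
    rank_eq_of_lt_imp_lt (hx.injective hs) fun _ _ => hx.lexKey_compress_lt hs
  funext i
  simp only [decompress, hr, compress, sub_add_cancel]

lemma one_le_compress (hx : ShiAvoiding s x) (hs : 1 ≤ s) (hb : ∀ v, 1 ≤ x v) (i : Fin n) :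
    1 ≤ compress s x i := by
  obtain ⟨j, -, hj⟩ := exists_min_image univ x ⟨i, mem_univ i⟩
  have h := hx.add_mul_rank_sub_le hs (hj i (mem_univ i))
  rw [rank_eq_zero_of_forall_le fun l => hj l (mem_univ l), Nat.cast_zero, sub_zero] at h
  have := hb j
  unfold compress
  split_ifs at h <;> linarith

lemma compress_le (hx : ShiAvoiding s x) (hs : 1 ≤ s) (hb : ∀ v, x v ≤ m) (i : Fin n) :
    compress s x i ≤ m - s * (n - 1) := by
  obtain ⟨j, -, hj⟩ := exists_max_image univ x ⟨i, mem_univ i⟩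
  have h := hx.add_mul_rank_sub_le hs (hj i (mem_univ i))
  have hn : (rank x j : ℤ) = n - 1 := by
    have := rank_add_one_of_forall_le (hx.injective hs) fun l => hj l (mem_univ l)
    omega
  have := hb j
  rw [hn] at h
  unfold compress
  split_ifs at h <;> linarith

end ShiAvoiding

variable {y : Fin n → ℤ}

lemma decompress_add_le (hs : 0 ≤ s) (h : lexKey y j < lexKey y i) :
    decompress s y j + s + (if j < i then 1 else 0) ≤ decompress s y i := by
  have hrank : s * rank (lexKey y) j + s ≤ s * rank (lexKey y) i := by
    have : (rank (lexKey y) j : ℤ) + 1 ≤ rank (lexKey y) i := by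
      exact_mod_cast rank_lt_rank h
    nlinarith
  rw [lexKey_lt_lexKey] at h
  unfold decompress
  split_ifs with hji
  · have : y j < y i := h.resolve_right fun ⟨_, hij⟩ => hij.asymm hji
    linarith
  · have : y j ≤ y i := h.elim le_of_lt fun h => h.1.le
    linarith

lemma shiAvoiding_decompress (hs : 0 ≤ s) : ShiAvoiding s (decompress s y) := by
  refine shiAvoiding_iff.2 fun i j hij => ?_
  rcases lt_or_gt_of_ne ((lexKey_injective y).ne hij.ne') with h | h
  · have := decompress_add_le hs h
    rw [if_neg hij.not_gt] at this
    left; linarith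
  · have := decompress_add_le hs h
    rw [if_pos hij] at this
    right; linarith

lemma compress_decompress (hs : 1 ≤ s) : compress s (decompress s y) = y := by
  have hr : rank (decompress s y) = rank (lexKey y) :=
    rank_eq_of_lt_imp_lt (lexKey_injective y) fun _ _ h => by
      have := decompress_add_le (s := s) (by omega) h
      split_ifs at this <;> linarith
  funext i
  simp only [compress, hr, decompress, add_sub_cancel_right]

lemma one_le_decompress (hs : 0 ≤ s) (hy : 1 ≤ y i) : 1 ≤ decompress s y i := by
  unfold decompress
  have : 0 ≤ s * rank (lexKey y) i := by positivity
  linarith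

lemma decompress_le (hs : 0 ≤ s) (hy : y i ≤ m - s * (n - 1)) : decompress s y i ≤ m := by
  have : (rank (lexKey y) i : ℤ) ≤ n - 1 := by
    have := rank_lt_card (lexKey y) i
    omega
  unfold decompress
  nlinarith

end Bijection

def avoidingEquivBox {n : ℕ} {s : ℤ} (m : ℤ) (hs : 1 ≤ s) :
    {x : Fin n → ℤ // (∀ v, 1 ≤ x v ∧ x v ≤ m) ∧ ShiAvoiding s x} ≃
      {y : Fin n → ℤ // ∀ i, 1 ≤ y i ∧ y i ≤ m - s * (n - 1)} where
  toFun x := ⟨compress s x.1, fun i =>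
    ⟨x.2.2.one_le_compress hs (fun v => (x.2.1 v).1) i,
      x.2.2.compress_le hs (fun v => (x.2.1 v).2) i⟩⟩
  invFun y := ⟨decompress s y.1, fun i =>
    ⟨one_le_decompress (by omega) (y.2 i).1, decompress_le (by omega) (y.2 i).2⟩,
    shiAvoiding_decompress (by omega)⟩
  left_inv x := Subtype.ext (x.2.2.decompress_compress hs)
  right_inv y := Subtype.ext (compress_decompress hs)

lemma card_box (n : ℕ) (k : ℤ) :
    Nat.card {y : Fin n → ℤ // ∀ i, 1 ≤ y i ∧ y i ≤ k} = k.toNat ^ n := by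
  rw [Nat.card_congr (Equiv.subtypePiEquivPi (p := fun _ z => 1 ≤ z ∧ z ≤ k)), Nat.card_pi,
    prod_const, card_univ, Fintype.card_fin]
  change Nat.card (Set.Icc 1 k) ^ n = _
  rw [Nat.card_eq_fintype_card, Fintype.card_Icc, Int.card_Icc, add_sub_cancel_right]

theorem latticeCount_extendedShi (n : ℕ) {s : ℤ} (hs : 1 ≤ s) (m : ℤ) :
    latticeCount (-s + 1) s n m = (m - s * (n - 1)).toNat ^ n :=
  (Nat.card_congr (avoidingEquivBox m hs)).trans (card_box n _)

end ExtendedShi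

open ExtendedShi in
/-- **Extended Shi arrangement count.**  For `n ≥ 1`, `s ≥ 1`, and any integer `m`, the number
of integer points of `[1, m]^n` lying on none of the hyperplanes `x j = x i + g`
(`1 ≤ i < j ≤ n`, `−s + 1 ≤ g ≤ s`) of the extended Shi arrangement `S_n(s)` is
`(m − s(n − 1))^n` when `m ≥ n + (s − 1)(n − 1)` and `0` otherwise. -/
theorem extended_shi_count (n : ℕ) (hn : 1 ≤ n) (s : ℤ) (hs : 1 ≤ s) (m : ℤ) :
    (latticeCount (-s + 1) s n m : ℤ) =
      if (n : ℤ) + (s - 1) * (n - 1) ≤ m then (m - s * (n - 1)) ^ n else 0 := by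
  rw [latticeCount_extendedShi n hs m]
  have hcorner : (n : ℤ) + (s - 1) * (n - 1) = s * (n - 1) + 1 := by ring
  split_ifs with h
  · rw [Nat.cast_pow, Int.toNat_of_nonneg (by omega)]
  · rw [Int.toNat_eq_zero.2 (by omega), zero_pow (by omega), Nat.cast_zero]
end

section
/- Reduction formula (Equation 5). For all integers n ≥ 1, all integers a, b with 0 ≤ a ≤ b, and every integer m: N_{[−a,b]}(n,m) = N_{[0, b−a]}(n, m − (n−1)a). -/
open Finset

/-!
Subtracting `a · rank` from a point, the rank of a coordinate being the number of strictly
smaller coordinates, is the bijection. Avoiding the gains `[-a, b]` means that distinct values are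
at least `a + 1` apart, and at least `b + 1` apart when the smaller value sits at the smaller
index. Splitting at intermediate values, a difference spanning `r` rank steps is then at least
`(a + 1) r`, and at least `b + 1 + (a + 1)(r - 1)` when the smaller value has the smaller index,
because a chain of values from a smaller to a larger index takes an ascending step somewhere.
After the shift these bounds read `r` and `b - a + 1 + (r - 1)`: avoidance of `[0, b - a]` in the
box `[1, m - (n - 1) a]`. The shift preserves ranks, so adding `a · rank` back inverts it.
-/

open Function

namespace LatticeCount

section Rank

variable {ι : Type*} [Fintype ι]

def rank (x : ι → ℤ) (i : ι) : ℕ := #{k | x k < x i}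

variable {x : ι → ℤ} {i j : ι}

theorem rank_eq_of_eq (h : x i = x j) : rank x i = rank x j := by
  simp only [rank, h]

theorem rank_lt_rank (h : x i < x j) : rank x i < rank x j := by
  refine card_lt_card ((ssubset_iff_of_subset fun k => ?_).2 ⟨i, by simp [h], by simp⟩)
  simpa only [mem_filter, mem_univ, true_and] using fun hk => hk.trans h

theorem rank_lt_card (i : ι) : rank x i < Fintype.card ι :=
  card_lt_univ_of_notMem (x := i) (by simp)

theorem rank_eq_zero_of_forall_le (h : ∀ k, x i ≤ x k) : rank x i = 0 := by
  simpa [rank, filter_eq_empty_iff] using h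

theorem rank_add_one_of_forall_le (hx : Injective x) (h : ∀ k, x k ≤ x i) :
    rank x i + 1 = Fintype.card ι := by
  classical
  have : ({k | x k < x i} : Finset ι) = univ.erase i := by
    ext k
    simp [lt_iff_le_and_ne, h k, hx.ne_iff]
  rw [rank, this, card_erase_of_mem (mem_univ i), card_univ]
  have := Fintype.card_pos_iff.2 ⟨i⟩
  omega

theorem rank_succ_of_adjacent (hx : Injective x) (h : x i < x j)
    (hadj : ∀ k, x i < x k → x j ≤ x k) : rank x j = rank x i + 1 := by
  classical
  rw [rank, rank, ← card_insert_of_notMem (s := {k | x k < x i}) (a := i) (by simp)]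
  congr 1
  ext k
  simp only [mem_filter, mem_univ, true_and, mem_insert]
  constructor
  · intro hk
    rcases lt_trichotomy (x k) (x i) with hki | hki | hki
    · exact Or.inr hki
    · exact Or.inl (hx hki)
    · exact absurd (hadj k hki) (not_le.2 hk)
  · rintro (rfl | hk)
    exacts [h, hk.trans h]

theorem rank_congr {y : ι → ℤ} (h : ∀ k l, x k < x l ↔ y k < y l) : rank x = rank y :=
  funext fun i => congrArg card (filter_congr fun k _ => h k i)

end Rank

theorem induction_on_adjacent {ι : Type*} {x : ι → ℤ} {P : ι → ι → Prop}
    (adjacent : ∀ i j, x i < x j → (∀ k, x i < x k → x j ≤ x k) → P i j)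
    (split : ∀ i j k, x i < x k → x k < x j → P i k → P k j → P i j)
    {i j : ι} (h : x i < x j) : P i j := by
  obtain ⟨d, hd⟩ : ∃ d : ℕ, x j - x i ≤ d := ⟨(x j - x i).toNat, Int.self_le_toNat _⟩
  induction d generalizing i j with
  | zero => omega
  | succ d ih =>
    by_cases hk : ∃ k, x i < x k ∧ x k < x j
    · obtain ⟨k, hik, hkj⟩ := hk
      exact split i j k hik hkj (ih hik (by omega)) (ih hkj (by omega))
    · push Not at hk
      exact adjacent i j h hk

section Gaps

variable {ι : Type*} [Fintype ι] {x : ι → ℤ} {i j : ι} {c₁ c₂ : ℤ}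

theorem add_mul_rank_sub_le (hx : Injective x) (hc : ∀ k l, x k < x l → x k + c₂ ≤ x l)
    (h : x i ≤ x j) : x i + c₂ * ((rank x j : ℤ) - rank x i) ≤ x j := by
  rcases h.eq_or_lt with h | h
  · simp [rank_eq_of_eq h, h]
  refine induction_on_adjacent
    (P := fun i j => x i + c₂ * ((rank x j : ℤ) - rank x i) ≤ x j) ?_ ?_ h
  · intro i j hij hadj
    rw [rank_succ_of_adjacent hx hij hadj]
    push_cast
    linarith [hc i j hij]
  · intro i j k _ _ hik hkj
    linarith

theorem add_add_mul_rank_sub_le [LinearOrder ι] (hx : Injective x)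
    (hc₂ : ∀ k l, x k < x l → x k + c₂ ≤ x l)
    (hc₁ : ∀ k l, k < l → x k < x l → x k + c₁ ≤ x l) (hij : i < j) (h : x i < x j) :
    x i + c₁ + c₂ * ((rank x j : ℤ) - rank x i - 1) ≤ x j := by
  refine induction_on_adjacent
    (P := fun i j => i < j → x i + c₁ + c₂ * ((rank x j : ℤ) - rank x i - 1) ≤ x j)
    ?_ ?_ h hij
  · intro i j hxij hadj hij
    rw [rank_succ_of_adjacent hx hxij hadj]
    push_cast
    linarith [hc₁ i j hij hxij]
  · intro i j k hik hkj ih_ik ih_kj hij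
    rcases lt_or_ge i k with hik' | hki
    · linarith [ih_ik hik', add_mul_rank_sub_le hx hc₂ hkj.le]
    · linarith [ih_kj (hki.trans_lt hij), add_mul_rank_sub_le hx hc₂ hik.le]

end Gaps

section Shift

variable {ι : Type*} [LinearOrder ι] {x : ι → ℤ} {c₁ c₂ t m : ℤ}

structure Spaced (c₁ c₂ : ℤ) (x : ι → ℤ) : Prop where
  injective : Injective x
  gap : ∀ k l, x k < x l → x k + c₂ ≤ x l
  ascent_gap : ∀ k l, k < l → x k < x l → x k + c₁ ≤ x l

theorem forall_ne_add_iff_spaced {lo hi : ℤ} (hlo : lo ≤ 0) (hhi : -lo ≤ hi) :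
    (∀ i j : ι, i < j → ∀ g : ℤ, lo ≤ g → g ≤ hi → x j ≠ x i + g) ↔
      Spaced (hi + 1) (1 - lo) x := by
  constructor
  · intro h
    have avoid : ∀ i j : ι, i < j → x j - x i < lo ∨ hi < x j - x i := by
      intro i j hij
      by_contra! hg
      exact h i j hij (x j - x i) hg.1 hg.2 (by ring)
    refine ⟨fun k l hkl => ?_, fun k l hxkl => ?_, fun k l hkl hxkl => ?_⟩
    · by_contra hne
      rcases lt_or_gt_of_ne hne with hlt | hlt
      · have := avoid k l hlt; omega
      · have := avoid l k hlt; omega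
    · rcases lt_trichotomy k l with hlt | rfl | hlt
      · have := avoid k l hlt; omega
      · omega
      · have := avoid l k hlt; omega
    · have := avoid k l hkl; omega
  · rintro ⟨hinj, hgap, hasc⟩ i j hij g hlo' hhi' hg
    rcases lt_trichotomy g 0 with hneg | rfl | hpos
    · have := hgap j i (by omega); omega
    · exact hij.ne (hinj (by simpa using hg.symm))
    · have := hasc i j hij (by omega); omega

variable [Fintype ι]

def shiftByRank (t : ℤ) (x : ι → ℤ) : ι → ℤ := fun i => x i + t * rank x i

theorem Spaced.lt_iff_shiftByRank_lt (hs : Spaced c₁ c₂ x) (ht : 1 ≤ c₂ + t) {k l : ι} :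
    x k < x l ↔ shiftByRank t x k < shiftByRank t x l := by
  have mono : ∀ k l, x k < x l → shiftByRank t x k < shiftByRank t x l := by
    intro k l h
    have hgap := add_mul_rank_sub_le hs.injective hs.gap h.le
    have hrank : (rank x k : ℤ) < rank x l := by exact_mod_cast rank_lt_rank h
    simp only [shiftByRank]
    nlinarith
  refine ⟨mono k l, fun h => ?_⟩
  rcases lt_trichotomy (x k) (x l) with hlt | heq | hgt
  · exact hlt
  · rw [hs.injective heq] at h
    exact absurd h (lt_irrefl _)
  · exact absurd h (mono l k hgt).not_gt

theorem Spaced.rank_shiftByRank (hs : Spaced c₁ c₂ x) (ht : 1 ≤ c₂ + t) :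
    rank (shiftByRank t x) = rank x :=
  (rank_congr fun _ _ => hs.lt_iff_shiftByRank_lt ht).symm

theorem Spaced.shiftByRank_mem_box (hs : Spaced c₁ c₂ x) (ht : 0 ≤ c₂ + t)
    (hbox : ∀ v, 1 ≤ x v ∧ x v ≤ m) (v : ι) :
    1 ≤ shiftByRank t x v ∧ shiftByRank t x v ≤ m + t * (Fintype.card ι - 1) := by
  have : Nonempty ι := ⟨v⟩
  obtain ⟨i₀, hmin⟩ := Finite.exists_min x
  obtain ⟨i₁, hmax⟩ := Finite.exists_max x
  have hlow := add_mul_rank_sub_le hs.injective hs.gap (hmin v)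
  have hhigh := add_mul_rank_sub_le hs.injective hs.gap (hmax v)
  rw [rank_eq_zero_of_forall_le hmin, Nat.cast_zero, sub_zero] at hlow
  have hcard : (rank x i₁ : ℤ) + 1 = Fintype.card ι := by
    exact_mod_cast rank_add_one_of_forall_le hs.injective hmax
  have hrank : (0 : ℤ) ≤ rank x v := Int.natCast_nonneg _
  have hrank' : (rank x v : ℤ) < Fintype.card ι := by exact_mod_cast rank_lt_card v
  simp only [shiftByRank]
  constructor
  · nlinarith [hbox i₀, mul_nonneg ht hrank]
  · rw [← hcard]
    nlinarith [hbox i₁, mul_nonneg ht (by omega : (0 : ℤ) ≤ rank x i₁ - rank x v)]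

theorem spaced_shiftByRank (hs : Spaced c₁ c₂ x) (ht : 1 ≤ c₂ + t) :
    Spaced (c₁ + t) (c₂ + t) (shiftByRank t x) := by
  have hlt : ∀ k l, x k < x l ↔ shiftByRank t x k < shiftByRank t x l :=
    fun _ _ => hs.lt_iff_shiftByRank_lt ht
  refine ⟨fun k l hkl => ?_, fun k l h => ?_, fun k l hkl h => ?_⟩
  · by_contra hne
    rcases lt_or_gt_of_ne (hs.injective.ne hne) with h | h
    · exact ((hlt k l).1 h).ne hkl
    · exact ((hlt l k).1 h).ne' hkl
  · rw [← hlt] at h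
    have hgap := add_mul_rank_sub_le hs.injective hs.gap h.le
    have hrank : (rank x k : ℤ) + 1 ≤ rank x l := by exact_mod_cast rank_lt_rank h
    simp only [shiftByRank]
    nlinarith
  · rw [← hlt] at h
    have hgap := add_add_mul_rank_sub_le hs.injective hs.gap hs.ascent_gap hkl h
    have hrank : (rank x k : ℤ) + 1 ≤ rank x l := by exact_mod_cast rank_lt_rank h
    simp only [shiftByRank]
    nlinarith

def spacedBox (c₁ c₂ m : ℤ) : Set (ι → ℤ) :=
  {x | (∀ v, 1 ≤ x v ∧ x v ≤ m) ∧ Spaced c₁ c₂ x}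

theorem shiftByRank_mem_spacedBox (hx : x ∈ spacedBox c₁ c₂ m) (ht : 1 ≤ c₂ + t) :
    shiftByRank t x ∈ spacedBox (c₁ + t) (c₂ + t) (m + t * (Fintype.card ι - 1)) :=
  ⟨hx.2.shiftByRank_mem_box (by omega) hx.1, spaced_shiftByRank hx.2 ht⟩

theorem Spaced.shiftByRank_neg_shiftByRank (hs : Spaced c₁ c₂ x) (ht : 1 ≤ c₂ + t) :
    shiftByRank (-t) (shiftByRank t x) = x := by
  funext i
  simp [shiftByRank, hs.rank_shiftByRank ht]

def spacedBoxShiftEquiv (h₂ : 1 ≤ c₂) (ht : 1 ≤ c₂ + t) :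
    (spacedBox c₁ c₂ m : Set (ι → ℤ)) ≃
      (spacedBox (c₁ + t) (c₂ + t) (m + t * (Fintype.card ι - 1)) : Set (ι → ℤ)) where
  toFun x := ⟨shiftByRank t x, shiftByRank_mem_spacedBox x.2 ht⟩
  invFun y := ⟨shiftByRank (-t) y, by
    simpa using shiftByRank_mem_spacedBox y.2 (t := -t) (by simpa using h₂)⟩
  left_inv x := Subtype.ext (x.2.2.shiftByRank_neg_shiftByRank ht)
  right_inv y := Subtype.ext (by
    simpa using y.2.2.shiftByRank_neg_shiftByRank (t := -t) (by simpa using h₂))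

end Shift

theorem latticeCount_eq_card_spacedBox {lo hi : ℤ} {n : ℕ} {m : ℤ} (hlo : lo ≤ 0)
    (hhi : -lo ≤ hi) :
    latticeCount lo hi n m = Nat.card (spacedBox (hi + 1) (1 - lo) m : Set (Fin n → ℤ)) :=
  Nat.card_congr <| Equiv.subtypeEquivRight fun _ =>
    and_congr_right' (forall_ne_add_iff_spaced hlo hhi)

end LatticeCount

theorem reduction_formula_general (n : ℕ) (a b : ℤ) (ha : 0 ≤ a) (hab : a ≤ b) (m : ℤ) :
    latticeCount (-a) b n m = latticeCount 0 (b - a) n (m - (n - 1) * a) := by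
  rw [LatticeCount.latticeCount_eq_card_spacedBox (by omega) (by omega),
    LatticeCount.latticeCount_eq_card_spacedBox le_rfl (by omega)]
  refine Nat.card_congr ((LatticeCount.spacedBoxShiftEquiv (t := -a) (by omega) (by omega)).trans
    (Equiv.setCongr ?_))
  rw [Fintype.card_fin]
  congr 1 <;> ring

/-- **Reduction formula** (Equation 5).  For `n ≥ 1`, `0 ≤ a ≤ b`, and every integer `m`:
`N_{[−a, b]}(n, m) = N_{[0, b − a]}(n, m − (n − 1)a)`. -/
theorem reduction_formula (n : ℕ) (hn : 1 ≤ n) (a b : ℤ) (ha : 0 ≤ a) (hab : a ≤ b) (m : ℤ) :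
    latticeCount (-a) b n m = latticeCount 0 (b - a) n (m - (n - 1) * a) :=
  reduction_formula_general n a b ha hab m
end

section
/- Eulerian formula for gain interval [0,b] (Equation 6). For all integers n ≥ 1, b ≥ 1, and m ≥ 0: N_{[0,b]}(n,m) = ∑_{r=0}^{n−1} A(n, r+1) · C(m − b·r, n). -/
/-!
Sort a point `x` of the cube by the permutation `σ = Tuple.sort x`, so that `y = x ∘ σ` is
monotone. The condition `x j ≠ x i + g` (`i < j`, `0 ≤ g ≤ b`) becomes a condition on consecutive
entries of `y`: at an ascent of `σ` they must differ by more than `b`, elsewhere merely be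
distinct. Subtracting from `y k` the value `b` times the number of ascents of `σ` before `k`
turns these tuples into the strictly increasing tuples in `[1, m - b r]`, where `r` is the
number of ascents of `σ`; there are `C(m - b r, n)` of them. Grouping the permutations by
their number of ascents gives the Eulerian numbers.
-/

open Finset

section Ascents

variable {n : ℕ} {α : Type*} [LinearOrder α]

def IsAscent (f : Fin n → α) (i : ℕ) : Prop :=
  ∃ h : i + 1 < n, f ⟨i, Nat.lt_of_succ_lt h⟩ < f ⟨i + 1, h⟩

instance (f : Fin n → α) : DecidablePred (IsAscent f) :=
  fun _ => inferInstanceAs (Decidable (∃ _ : _, _))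

noncomputable def ascentCount (f : Fin n → α) : ℕ :=
  Nat.card {i : ℕ // IsAscent f i}

theorem eulerianNumber_eq_card (n r : ℕ) :
    eulerianNumber n r = Nat.card {σ : Equiv.Perm (Fin n) // ascentCount σ = r} :=
  rfl

theorem ascentCount_eq_card_filter (f : Fin n → α) :
    ascentCount f = #{i ∈ range (n - 1) | IsAscent f i} := by
  rw [ascentCount, ← Nat.card_eq_finsetCard]
  exact Nat.card_congr <| Equiv.subtypeEquivRight fun i => by
    simp only [mem_filter, mem_range, iff_and_self]
    exact fun ⟨h, _⟩ => by omega

theorem ascentCount_lt (hn : 1 ≤ n) (f : Fin n → α) : ascentCount f < n := by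
  have := (card_filter_le (range (n - 1)) fun i => IsAscent f i).trans_eq (card_range _)
  rw [ascentCount_eq_card_filter]
  omega

theorem exists_isAscent_of_lt {f : Fin n → α} {k l : Fin n} (hkl : f k < f l) (hlt : k < l) :
    ∃ i, (k : ℕ) ≤ i ∧ i < l ∧ IsAscent f i := by
  obtain ⟨k, hk⟩ := k
  obtain ⟨l, hl⟩ := l
  replace hlt : k ≤ l := (Fin.mk_lt_mk.1 hlt).le
  induction l, hlt using Nat.le_induction with
  | base => exact absurd hkl (lt_irrefl _)
  | succ l hkl' ih =>
    by_cases hasc : f ⟨l, by omega⟩ < f ⟨l + 1, hl⟩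
    · exact ⟨l, hkl', l.lt_succ_self, hl, hasc⟩
    · obtain ⟨i, hki, hil, hi⟩ := ih (by omega) (hkl.trans_le (not_lt.1 hasc))
      exact ⟨i, hki, hil.trans l.lt_succ_self, hi⟩

end Ascents

theorem sum_ascentCount_eq_sum_eulerianNumber {n : ℕ} (hn : 1 ≤ n) {M : Type*}
    [AddCommMonoid M] (g : ℕ → M) :
    ∑ σ : Equiv.Perm (Fin n), g (ascentCount σ) = ∑ r ∈ range n, eulerianNumber n r • g r := by
  rw [← sum_fiberwise_of_maps_to (g := fun σ : Equiv.Perm (Fin n) => ascentCount σ)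
    fun σ _ => mem_range.2 (ascentCount_lt hn σ)]
  refine sum_congr rfl fun r _ => ?_
  rw [sum_congr rfl fun σ hσ => congrArg g (mem_filter.1 hσ).2, sum_const,
    eulerianNumber_eq_card, Nat.card_eq_fintype_card, Fintype.card_subtype]

section Gaps

variable {n : ℕ}

def HasGaps (d : ℕ → ℤ) (y : Fin n → ℤ) : Prop :=
  ∀ k (hk : k + 1 < n), y ⟨k, Nat.lt_of_succ_lt hk⟩ + d k < y ⟨k + 1, hk⟩

theorem strictMono_iff_lt_succ {α : Type*} [Preorder α] {f : Fin n → α} :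
    StrictMono f ↔ ∀ k (hk : k + 1 < n), f ⟨k, Nat.lt_of_succ_lt hk⟩ < f ⟨k + 1, hk⟩ := by
  cases n with
  | zero => exact ⟨fun _ _ hk => by omega, fun _ i => i.elim0⟩
  | succ n =>
    rw [Fin.strictMono_iff_lt_succ]
    exact ⟨fun h k hk => h ⟨k, by omega⟩, fun h i => h i (by omega)⟩

theorem hasGaps_iff_strictMono_sub {d : ℕ → ℤ} {y : Fin n → ℤ} :
    HasGaps d y ↔ StrictMono (y - fun v : Fin n => ∑ i ∈ range v, d i) := by
  rw [strictMono_iff_lt_succ]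
  refine forall₂_congr fun k hk => ?_
  simp only [Pi.sub_apply, sum_range_succ]
  constructor <;> intro h <;> linarith

theorem HasGaps.strictMono {d : ℕ → ℤ} (hd : ∀ k, 0 ≤ d k) {y : Fin n → ℤ} (h : HasGaps d y) :
    StrictMono y :=
  strictMono_iff_lt_succ.2 fun k hk => (le_add_of_nonneg_right (hd k)).trans_lt (h k hk)

theorem HasGaps.add_lt {d : ℕ → ℤ} (hd : ∀ k, 0 ≤ d k) {y : Fin n → ℤ} (h : HasGaps d y)
    {k l : Fin n} {i : ℕ} (hki : (k : ℕ) ≤ i) (hil : i < l) : y k + d i < y l :=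
  calc y k + d i ≤ y ⟨i, by omega⟩ + d i := by gcongr; exact (h.strictMono hd).monotone hki
    _ < y ⟨i + 1, by omega⟩ := h i (by omega)
    _ ≤ y l := (h.strictMono hd).monotone (Fin.mk_le_of_le_val hil)

instance (m : ℤ) (d : ℕ → ℤ) :
    Finite {y : Fin n → ℤ // (∀ v, 1 ≤ y v ∧ y v ≤ m) ∧ HasGaps d y} :=
  ((Set.finite_Icc (1 : Fin n → ℤ) fun _ => m).subset
    fun _ hy => ⟨fun v => (hy.1 v).1, fun v => (hy.1 v).2⟩).to_subtype

theorem card_strictMono_tuples {α : Type*} [LinearOrder α] (s : Set α) :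
    Nat.card {z : Fin n → α // StrictMono z ∧ ∀ v, z v ∈ s} = (Nat.card s).choose n := by
  rw [← Set.powersetCard.card]
  refine Nat.card_congr (Equiv.trans ?_ Set.powersetCard.ofFinEmbEquiv)
  exact
    { toFun z := OrderEmbedding.ofStrictMono (fun v => ⟨z.1 v, z.2.2 v⟩) fun _ _ h => z.2.1 h
      invFun f := ⟨fun v => f v, fun _ _ h => f.strictMono h, fun v => (f v).2⟩
      left_inv _ := rfl
      right_inv _ := rfl }

theorem card_hasGaps {d : ℕ → ℤ} (hd : ∀ k, 0 ≤ d k) (m : ℤ) :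
    Nat.card {y : Fin n → ℤ // (∀ v, 1 ≤ y v ∧ y v ≤ m) ∧ HasGaps d y} =
      (m - ∑ i ∈ range (n - 1), d i).toNat.choose n := by
  set D : Fin n → ℤ := fun v => ∑ i ∈ range v, d i
  have hD_nonneg (v : Fin n) : 0 ≤ D v := sum_nonneg fun i _ => hd i
  have hD_le (v : Fin n) : D v ≤ ∑ i ∈ range (n - 1), d i :=
    sum_le_sum_of_subset_of_nonneg (range_subset_range.2 (by omega)) fun i _ _ => hd i
  have hbox {y : Fin n → ℤ} (hz : StrictMono (y - D)) : (∀ v, 1 ≤ y v ∧ y v ≤ m) ↔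
      ∀ v, (y - D) v ∈ Set.Icc 1 (m - ∑ i ∈ range (n - 1), d i) := by
    refine ⟨fun hy v => ?_, fun hz' v => ?_⟩
    · have hn : 0 < n := v.pos
      have hfirst : (y - D) ⟨0, hn⟩ ≤ (y - D) v := hz.monotone (Fin.mk_le_of_le_val v.val.zero_le)
      have hlast : (y - D) v ≤ (y - D) ⟨n - 1, by omega⟩ :=
        hz.monotone (Fin.mk_le_of_le_val (Nat.le_sub_one_of_lt v.2))
      simp only [Pi.sub_apply, D, range_zero, sum_empty] at hfirst hlast ⊢
      exact ⟨by linarith [hy ⟨0, hn⟩], by linarith [hy ⟨n - 1, by omega⟩]⟩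
    · have := hz' v
      simp only [Pi.sub_apply, Set.mem_Icc] at this
      constructor <;> linarith [hD_nonneg v, hD_le v]
  have e : {y : Fin n → ℤ // (∀ v, 1 ≤ y v ∧ y v ≤ m) ∧ HasGaps d y} ≃
      {z : Fin n → ℤ // StrictMono z ∧ ∀ v, z v ∈ Set.Icc 1 (m - ∑ i ∈ range (n - 1), d i)} :=
    (Equiv.subRight D).subtypeEquiv fun y => by
      rw [hasGaps_iff_strictMono_sub, and_comm]
      exact and_congr_right hbox
  rw [Nat.card_congr e, card_strictMono_tuples, Nat.card_eq_fintype_card, Fintype.card_Icc,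
    Int.card_Icc, add_sub_cancel_right]

end Gaps

theorem Tuple.sort_comp_symm_of_strictMono {n : ℕ} {α : Type*} [LinearOrder α]
    {y : Fin n → α} (hy : StrictMono y) (σ : Equiv.Perm (Fin n)) :
    Tuple.sort (y ∘ σ.symm) = σ := by
  refine (Tuple.eq_sort_iff.2 ⟨?_, fun i j hij h => ?_⟩).symm
  · simpa [Function.comp_def] using hy.monotone
  · simp only [Function.comp_apply, Equiv.symm_apply_apply] at h
    exact absurd (hy.injective h) hij.ne

section GainFree

variable {n : ℕ} {b : ℤ}

def IsGainFree (b : ℤ) (x : Fin n → ℤ) : Prop :=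
  ∀ i j : Fin n, i < j → ∀ g : ℤ, 0 ≤ g → g ≤ b → x j ≠ x i + g

def ascentGap (b : ℤ) (σ : Equiv.Perm (Fin n)) (k : ℕ) : ℤ :=
  if IsAscent σ k then b else 0

theorem ascentGap_nonneg (hb : 0 ≤ b) (σ : Equiv.Perm (Fin n)) (k : ℕ) :
    0 ≤ ascentGap b σ k := by
  unfold ascentGap
  split_ifs <;> omega

theorem sum_ascentGap (b : ℤ) (σ : Equiv.Perm (Fin n)) :
    ∑ k ∈ range (n - 1), ascentGap b σ k = b * ascentCount σ := by
  rw [ascentCount_eq_card_filter, ← sum_boole, mul_sum]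
  refine sum_congr rfl fun k _ => ?_
  unfold ascentGap
  split_ifs <;> simp

theorem IsGainFree.hasGaps_comp (hb : 0 ≤ b) {x : Fin n → ℤ} (hx : IsGainFree b x)
    {σ : Equiv.Perm (Fin n)} (hσ : Monotone (x ∘ σ)) : HasGaps (ascentGap b σ) (x ∘ σ) := by
  intro k hk
  have hle : x (σ ⟨k, Nat.lt_of_succ_lt hk⟩) ≤ x (σ ⟨k + 1, hk⟩) := hσ (Fin.mk_le_mk.2 k.le_succ)
  simp only [ascentGap, Function.comp_apply]
  split_ifs with hasc
  · by_contra! hcon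
    exact hx _ _ hasc.2 _ (sub_nonneg.2 hle) (by linarith) (by ring)
  · have hdesc : σ ⟨k + 1, hk⟩ < σ ⟨k, Nat.lt_of_succ_lt hk⟩ :=
      (not_lt.1 fun h => hasc ⟨hk, h⟩).lt_of_ne (σ.injective.ne (by simp))
    simpa using hle.lt_of_ne fun h => hx _ _ hdesc 0 le_rfl hb (by simp [h])

theorem HasGaps.isGainFree_comp_symm (hb : 0 ≤ b) {σ : Equiv.Perm (Fin n)} {y : Fin n → ℤ}
    (hy : HasGaps (ascentGap b σ) y) : IsGainFree b (y ∘ σ.symm) := by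
  intro i j hij g hg0 hgb heq
  have hd := ascentGap_nonneg hb σ
  have hmono := hy.strictMono hd
  simp only [Function.comp_apply] at heq
  have hkl : σ.symm i < σ.symm j := by
    refine (hmono.le_iff_le.1 (heq ▸ le_add_of_nonneg_right hg0)).lt_of_ne fun h => ?_
    exact hij.ne (σ.symm.injective h)
  obtain ⟨p, hkp, hpl, hp⟩ := exists_isAscent_of_lt (f := σ) (by simpa using hij) hkl
  have := hy.add_lt hd hkp hpl
  rw [ascentGap, if_pos hp] at this
  linarith

def sortEquiv (hb : 0 ≤ b) (m : ℤ) :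
    {x : Fin n → ℤ // (∀ v, 1 ≤ x v ∧ x v ≤ m) ∧ IsGainFree b x} ≃
      Σ σ : Equiv.Perm (Fin n),
        {y : Fin n → ℤ // (∀ v, 1 ≤ y v ∧ y v ≤ m) ∧ HasGaps (ascentGap b σ) y} where
  toFun x := ⟨Tuple.sort x.1, x.1 ∘ Tuple.sort x.1, fun _ => x.2.1 _,
    x.2.2.hasGaps_comp hb (Tuple.monotone_sort x.1)⟩
  invFun p := ⟨p.2.1 ∘ p.1.symm, fun _ => p.2.2.1 _, p.2.2.2.isGainFree_comp_symm hb⟩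
  left_inv x := by ext v; simp
  right_inv := by
    rintro ⟨σ, y, hy⟩
    have hσ := Tuple.sort_comp_symm_of_strictMono (hy.2.strictMono (ascentGap_nonneg hb σ)) σ
    refine Sigma.subtype_ext hσ ?_
    change (y ∘ σ.symm) ∘ Tuple.sort (y ∘ σ.symm) = y
    rw [hσ, Function.comp_assoc, Equiv.symm_comp_self, Function.comp_id]

end GainFree

theorem eulerian_formula_nonneg_general (n : ℕ) (hn : 1 ≤ n) (b : ℤ) (hb : 1 ≤ b) (m : ℤ) :
    latticeCount 0 b n m =
      ∑ r ∈ Finset.range n, eulerianNumber n r * intChoose (m - b * r) n := by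
  have hb0 : 0 ≤ b := by omega
  calc latticeCount 0 b n m
      = ∑ σ : Equiv.Perm (Fin n),
          Nat.card {y : Fin n → ℤ // (∀ v, 1 ≤ y v ∧ y v ≤ m) ∧ HasGaps (ascentGap b σ) y} :=
        (Nat.card_congr (sortEquiv hb0 m)).trans Nat.card_sigma
    _ = ∑ σ : Equiv.Perm (Fin n), intChoose (m - b * ascentCount σ) n := by
        simp only [card_hasGaps (ascentGap_nonneg hb0 _), sum_ascentGap]
        rfl
    _ = _ := by
        rw [sum_ascentCount_eq_sum_eulerianNumber hn (fun r => intChoose (m - b * r) n)]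
        simp only [smul_eq_mul]

/-- **Eulerian formula for gain interval `[0, b]`** (Equation 6).  For `n ≥ 1`, `b ≥ 1`, and
`m ≥ 0`: `N_{[0,b]}(n, m) = ∑_{r=0}^{n−1} A(n, r+1) C(m − b r, n)`. -/
theorem eulerian_formula_nonneg (n : ℕ) (hn : 1 ≤ n) (b : ℤ) (hb : 1 ≤ b)
    (m : ℤ) (hm : 0 ≤ m) :
    latticeCount 0 b n m =
      ∑ r ∈ Finset.range n, eulerianNumber n r * intChoose (m - b * r) n :=
  eulerian_formula_nonneg_general n hn b hb m
end

section
/- Eulerian formula for gain interval [−a,b]. For all integers n ≥ 1 and a, b with 0 ≤ a ≤ b (and a < b or a = b allowed), and every integer m: if m ≥ (n−1)a then N_{[−a,b]}(n,m) = ∑_{r=0}^{n−1} A(n, r+1) · C(m − (n−1)a − (b−a)·r, n), and if m < (n−1)a then N_{[−a,b]}(n,m) = 0. -/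
open Finset

/-!
Sort the coordinates of an admissible point `x`: if `σ` is the permutation with `x ∘ σ`
increasing, the forbidden gains `[-a, b]` force consecutive sorted values to differ by more than
`b` across an ascent of `σ` and by more than `a` across a descent, and conversely these adjacent
gaps already give every pairwise constraint. Subtracting the accumulated minimal gaps turns
`x ∘ σ` into an arbitrary strictly increasing sequence in `[1, m - (n - 1) a - (b - a) asc σ]`,
so each `σ` contributes a binomial coefficient depending only on its number of ascents.
-/

theorem Tuple.eq_sort_iff_strictMono {α : Type*} [LinearOrder α] {n : ℕ} {f : Fin n → α}
    (hf : Function.Injective f) {σ : Equiv.Perm (Fin n)} :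
    σ = Tuple.sort f ↔ StrictMono (f ∘ σ) := by
  rw [Tuple.eq_sort_iff]
  refine ⟨fun h => h.1.strictMono_of_injective (hf.comp σ.injective),
    fun h => ⟨h.monotone, fun i j hij heq => absurd (σ.injective (hf heq)) hij.ne⟩⟩

theorem Nat.card_eq_sum_card_strictMono_comp {α : Type*} [LinearOrder α] {n : ℕ}
    {P : (Fin n → α) → Prop} [Finite {x // P x}] (hP : ∀ x, P x → Function.Injective x) :
    Nat.card {x // P x} =
      ∑ σ : Equiv.Perm (Fin n), Nat.card {x // P x ∧ StrictMono (x ∘ σ)} := by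
  rw [← Nat.card_congr (Equiv.sigmaFiberEquiv fun x : {x // P x} => Tuple.sort x.1),
    Nat.card_sigma]
  refine Finset.sum_congr rfl fun σ _ => Nat.card_congr ?_
  refine (Equiv.subtypeSubtypeEquivSubtypeInter P (fun x => Tuple.sort x = σ)).trans
    (Equiv.subtypeEquivRight fun x => and_congr_right fun hx => ?_)
  rw [eq_comm, Tuple.eq_sort_iff_strictMono (hP x hx)]

noncomputable def Finset.strictMonoEquivPowersetCard {α : Type*} [LinearOrder α]
    (s : Finset α) (k : ℕ) :
    {f : Fin k → α // StrictMono f ∧ ∀ i, f i ∈ s} ≃ powersetCard k s where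
  toFun f := ⟨univ.image f.1, mem_powersetCard.mpr
    ⟨by simpa [Finset.subset_iff] using f.2.2,
      by rw [card_image_of_injective _ f.2.1.injective, card_univ, Fintype.card_fin]⟩⟩
  invFun t := ⟨orderEmbOfFin t.1 (mem_powersetCard.mp t.2).2, (orderEmbOfFin _ _).strictMono,
    fun i => (mem_powersetCard.mp t.2).1 (orderEmbOfFin_mem _ _ i)⟩
  left_inv f := Subtype.ext (orderEmbOfFin_unique _
    (fun i => mem_image_of_mem _ (mem_univ i)) f.2.1).symm
  right_inv t := Subtype.ext <| coe_injective <| by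
    rw [coe_image, coe_univ, Set.image_univ, range_orderEmbOfFin]

theorem Finset.card_strictMono_mem {α : Type*} [LinearOrder α] (s : Finset α) (k : ℕ) :
    Nat.card {f : Fin k → α // StrictMono f ∧ ∀ i, f i ∈ s} = (#s).choose k := by
  rw [Nat.card_congr (s.strictMonoEquivPowersetCard k), Nat.card_eq_finsetCard,
    card_powersetCard]

theorem Fin.forall_mem_Icc_iff_of_monotone {β : Type*} [Preorder β] {n : ℕ}
    {f : Fin (n + 1) → β} (hf : Monotone f) {lo hi : β} :
    (∀ i, lo ≤ f i ∧ f i ≤ hi) ↔ lo ≤ f 0 ∧ f (last n) ≤ hi :=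
  ⟨fun h => ⟨(h 0).1, (h _).2⟩,
    fun h i => ⟨h.1.trans (hf (Fin.zero_le i)), (hf (Fin.le_last i)).trans h.2⟩⟩

theorem intChoose_eq_zero_of_lt {t : ℤ} {n : ℕ} (h : t < n) (hn : 0 < n) : intChoose t n = 0 :=
  Nat.choose_eq_zero_of_lt (by omega)

def AvoidsGains {n : ℕ} (a b : ℤ) (x : Fin n → ℤ) : Prop :=
  ∀ i j : Fin n, i < j → ∀ g : ℤ, a ≤ g → g ≤ b → x j ≠ x i + g

theorem AvoidsGains.injective {n : ℕ} {a b : ℤ} {x : Fin n → ℤ} (hx : AvoidsGains a b x)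
    (ha : a ≤ 0) (hb : 0 ≤ b) : Function.Injective x := by
  intro i j hij
  by_contra hne
  rcases lt_or_gt_of_ne hne with h | h
  · exact hx i j h 0 ha hb (by rw [hij, add_zero])
  · exact hx j i h 0 ha hb (by rw [hij, add_zero])

section Sorted

variable {n : ℕ} {a b : ℤ}

def threshold (a b : ℤ) (σ : Equiv.Perm (Fin n)) (k l : Fin n) : ℤ :=
  if σ k < σ l then b else a

theorem threshold_nonneg (ha : 0 ≤ a) (hab : a ≤ b) (σ : Equiv.Perm (Fin n)) (k l : Fin n) :
    0 ≤ threshold a b σ k l := by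
  unfold threshold; split_ifs <;> omega

theorem threshold_le_add (ha : 0 ≤ a) (hab : a ≤ b) (σ : Equiv.Perm (Fin n)) (k j l : Fin n) :
    threshold a b σ k l ≤ threshold a b σ k j + threshold a b σ j l := by
  unfold threshold; split_ifs <;> omega

theorem avoidsGains_and_strictMono_comp_iff (ha : 0 ≤ a) (hab : a ≤ b)
    (σ : Equiv.Perm (Fin n)) (x : Fin n → ℤ) :
    AvoidsGains (-a) b x ∧ StrictMono (x ∘ σ) ↔
      ∀ k l, k < l → x (σ k) + threshold a b σ k l < x (σ l) := by
  constructor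
  · rintro ⟨hx, hmono⟩ k l hkl
    have hlt : x (σ k) < x (σ l) := hmono hkl
    unfold threshold
    split_ifs with hσ
    · by_contra! hle
      exact hx _ _ hσ (x (σ l) - x (σ k)) (by omega) (by omega) (by ring)
    · have hσ' : σ l < σ k := lt_of_le_of_ne (not_lt.mp hσ) (σ.injective.ne hkl.ne')
      by_contra! hle
      exact hx _ _ hσ' (x (σ k) - x (σ l)) (by omega) (by omega) (by ring)
  · intro h
    refine ⟨fun i j hij g hg hg' heq => ?_, fun k l hkl => ?_⟩
    · rcases lt_trichotomy (σ.symm i) (σ.symm j) with hk | hk | hk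
      · have := h _ _ hk
        simp only [threshold, Equiv.apply_symm_apply, if_pos hij] at this
        omega
      · exact hij.ne (σ.symm.injective hk)
      · have := h _ _ hk
        simp only [threshold, Equiv.apply_symm_apply, if_neg hij.not_gt] at this
        omega
    · have := h k l hkl
      have := threshold_nonneg ha hab σ k l
      simp only [Function.comp_apply]
      omega

def offset (a b : ℤ) (σ : Equiv.Perm (Fin (n + 1))) : Fin (n + 1) → ℤ :=
  Fin.partialSum fun i => threshold a b σ i.castSucc i.succ

def ascents (σ : Equiv.Perm (Fin (n + 1))) : Finset (Fin n) :=
  {i | σ i.castSucc < σ i.succ}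

theorem offset_monotone (ha : 0 ≤ a) (hab : a ≤ b) (σ : Equiv.Perm (Fin (n + 1))) :
    Monotone (offset a b σ) :=
  Fin.monotone_iff_le_succ.mpr fun i => by
    rw [offset, Fin.partialSum_succ]
    linarith [threshold_nonneg ha hab σ i.castSucc i.succ]

theorem offset_last (σ : Equiv.Perm (Fin (n + 1))) :
    offset a b σ (Fin.last n) = n * a + (b - a) * #(ascents σ) := by
  have hsum : offset a b σ (Fin.last n) = ∑ i : Fin n, threshold a b σ i.castSucc i.succ := by
    simp [offset, Fin.partialSum, List.take_of_length_le, List.sum_ofFn]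
  have hterm : ∀ i : Fin n, threshold a b σ i.castSucc i.succ =
      a + (b - a) * if σ i.castSucc < σ i.succ then 1 else 0 := by
    intro i; unfold threshold; split_ifs <;> ring
  rw [hsum, Finset.sum_congr rfl fun i _ => hterm i, sum_add_distrib, ← mul_sum, sum_boole,
    sum_const, card_univ, Fintype.card_fin, nsmul_eq_mul, ascents]

theorem forall_threshold_iff_strictMono_sub_offset (ha : 0 ≤ a) (hab : a ≤ b)
    (σ : Equiv.Perm (Fin (n + 1))) (y : Fin (n + 1) → ℤ) :
    (∀ k l, k < l → y k + threshold a b σ k l < y l) ↔ StrictMono (y - offset a b σ) := by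
  have hsucc : ∀ i : Fin n, (y - offset a b σ) i.castSucc < (y - offset a b σ) i.succ ↔
      y i.castSucc + threshold a b σ i.castSucc i.succ < y i.succ := by
    intro i
    simp only [Pi.sub_apply, offset, Fin.partialSum_succ]
    constructor <;> intro h <;> linarith
  rw [Fin.strictMono_iff_lt_succ]
  refine ⟨fun h i => (hsucc i).mpr (h _ _ i.castSucc_lt_succ), fun h k l hkl => ?_⟩
  induction l using Fin.induction with
  | zero => exact absurd hkl (Fin.not_lt_zero k)
  | succ i ih =>
    have hi := (hsucc i).mp (h i)
    rcases (Fin.le_castSucc_iff.mpr hkl).eq_or_lt with rfl | hk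
    · exact hi
    · linarith [ih hk, threshold_le_add ha hab σ k i.castSucc i.succ]

theorem admissible_and_strictMono_comp_iff (ha : 0 ≤ a) (hab : a ≤ b)
    (σ : Equiv.Perm (Fin (n + 1))) (m : ℤ) (x : Fin (n + 1) → ℤ) :
    ((∀ v, 1 ≤ x v ∧ x v ≤ m) ∧ AvoidsGains (-a) b x) ∧ StrictMono (x ∘ σ) ↔
      StrictMono (x ∘ σ - offset a b σ) ∧
        ∀ i, (x ∘ σ - offset a b σ) i ∈ Icc 1 (m - offset a b σ (Fin.last n)) := by
  have hz_iff := forall_threshold_iff_strictMono_sub_offset ha hab σ (x ∘ σ)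
  simp only [Function.comp_apply] at hz_iff
  rw [and_assoc, avoidsGains_and_strictMono_comp_iff ha hab, hz_iff, and_comm]
  refine and_congr_right fun hz => ?_
  have hy : Monotone (x ∘ σ) := by
    simpa only [Pi.sub_apply, sub_add_cancel] using hz.monotone.add (offset_monotone ha hab σ)
  have hbox := Fin.forall_mem_Icc_iff_of_monotone hy (lo := 1) (hi := m)
  simp only [Function.comp_apply] at hbox
  have h0 : offset a b σ 0 = 0 := Fin.partialSum_zero _
  simp only [mem_Icc]
  rw [← σ.forall_congr_right, hbox, Fin.forall_mem_Icc_iff_of_monotone hz.monotone]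
  simp only [Pi.sub_apply, Function.comp_apply, h0]
  omega

theorem card_admissible_strictMono_comp (ha : 0 ≤ a) (hab : a ≤ b)
    (σ : Equiv.Perm (Fin (n + 1))) (m : ℤ) :
    Nat.card {x // ((∀ v, 1 ≤ x v ∧ x v ≤ m) ∧ AvoidsGains (-a) b x) ∧ StrictMono (x ∘ σ)} =
      intChoose (m - offset a b σ (Fin.last n)) (n + 1) := by
  let e : (Fin (n + 1) → ℤ) ≃ (Fin (n + 1) → ℤ) :=
    (Equiv.arrowCongr σ.symm (Equiv.refl ℤ)).trans (Equiv.subRight (offset a b σ))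
  rw [Nat.card_congr (Equiv.subtypeEquiv (q := fun z => StrictMono z ∧ ∀ i, z i ∈ Icc 1 (m - offset a b σ (Fin.last n)))
      e (admissible_and_strictMono_comp_iff ha hab σ m)),
    card_strictMono_mem, Int.card_Icc, add_sub_cancel_right, intChoose]

end Sorted

theorem latticeCount_eq_sum_perm {n : ℕ} {a b : ℤ} (ha : 0 ≤ a) (hab : a ≤ b) (m : ℤ) :
    latticeCount (-a) b (n + 1) m =
      ∑ σ : Equiv.Perm (Fin (n + 1)), intChoose (m - n * a - (b - a) * #(ascents σ)) (n + 1) := by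
  have : Finite {x : Fin (n + 1) → ℤ // (∀ v, 1 ≤ x v ∧ x v ≤ m) ∧ AvoidsGains (-a) b x} :=
    Set.Finite.to_subtype <| (Set.finite_Icc (fun _ => 1) (fun _ => m)).subset
      fun x hx => ⟨fun v => (hx.1 v).1, fun v => (hx.1 v).2⟩
  change Nat.card {x // (∀ v, 1 ≤ x v ∧ x v ≤ m) ∧ AvoidsGains (-a) b x} = _
  rw [Nat.card_eq_sum_card_strictMono_comp fun x hx =>
    hx.2.injective (by omega) (by omega)]
  refine sum_congr rfl fun σ _ => ?_
  rw [card_admissible_strictMono_comp ha hab, offset_last, sub_add_eq_sub_sub]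

theorem eulerianNumber_succ_eq_card (n r : ℕ) :
    eulerianNumber (n + 1) r = #{σ : Equiv.Perm (Fin (n + 1)) | #(ascents σ) = r} := by
  have hasc : ∀ σ : Equiv.Perm (Fin (n + 1)),
      Nat.card {i : ℕ // ∃ h : i + 1 < n + 1, σ ⟨i, Nat.lt_of_succ_lt h⟩ < σ ⟨i + 1, h⟩} =
        #(ascents σ) := fun σ => by
    rw [ascents, ← Fintype.card_subtype, ← Nat.card_eq_fintype_card]
    exact Nat.card_congr
      { toFun := fun i => ⟨⟨i.1, Nat.succ_lt_succ_iff.mp i.2.1⟩, i.2.2⟩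
        invFun := fun i => ⟨i.1, Nat.succ_lt_succ i.1.2, i.2⟩ }
  rw [eulerianNumber, ← Fintype.card_subtype, ← Nat.card_eq_fintype_card]
  exact Nat.card_congr (Equiv.subtypeEquivRight fun σ => by rw [hasc])

theorem sum_perm_eq_sum_eulerianNumber {n : ℕ} (f : ℕ → ℕ) :
    ∑ σ : Equiv.Perm (Fin (n + 1)), f #(ascents σ) =
      ∑ r ∈ range (n + 1), eulerianNumber (n + 1) r * f r := by
  have hmaps : ∀ σ ∈ (univ : Finset (Equiv.Perm (Fin (n + 1)))), #(ascents σ) ∈ range (n + 1) :=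
    fun σ _ => mem_range.mpr (Nat.lt_succ_of_le ((card_le_univ _).trans (Fintype.card_fin n).le))
  rw [← sum_fiberwise_of_maps_to hmaps]
  refine sum_congr rfl fun r _ => ?_
  rw [eulerianNumber_succ_eq_card, sum_const_nat fun σ hσ => by rw [(mem_filter.mp hσ).2]]

/-- **Eulerian formula for gain interval `[−a, b]`.**  For `n ≥ 1` and `0 ≤ a ≤ b`:
if `m ≥ (n − 1)a` then
`N_{[−a,b]}(n, m) = ∑_{r=0}^{n−1} A(n, r+1) C(m − (n−1)a − (b−a) r, n)`,
and if `m < (n − 1)a` then `N_{[−a,b]}(n, m) = 0`. -/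
theorem eulerian_formula_general (n : ℕ) (hn : 1 ≤ n) (a b : ℤ) (ha : 0 ≤ a) (hab : a ≤ b)
    (m : ℤ) :
    (((n : ℤ) - 1) * a ≤ m →
      latticeCount (-a) b n m =
        ∑ r ∈ Finset.range n, eulerianNumber n r *
          intChoose (m - ((n : ℤ) - 1) * a - (b - a) * r) n) ∧
    (m < ((n : ℤ) - 1) * a → latticeCount (-a) b n m = 0) := by
  obtain ⟨n, rfl⟩ := Nat.exists_eq_add_of_le' hn
  have hformula : latticeCount (-a) b (n + 1) m = ∑ r ∈ range (n + 1), eulerianNumber (n + 1) r *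
      intChoose (m - (((n + 1 : ℕ) : ℤ) - 1) * a - (b - a) * r) (n + 1) := by
    rw [latticeCount_eq_sum_perm ha hab, sum_perm_eq_sum_eulerianNumber
      fun r => intChoose (m - n * a - (b - a) * r) (n + 1)]
    push_cast
    ring_nf
  refine ⟨fun _ => hformula, fun hm => ?_⟩
  rw [hformula]
  refine sum_eq_zero fun r _ => ?_
  have hr : 0 ≤ (b - a) * (r : ℤ) := mul_nonneg (by omega) r.cast_nonneg
  rw [intChoose_eq_zero_of_lt (by push_cast at hm ⊢; linarith) (Nat.succ_pos n), mul_zero]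
end
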